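/- arXiv:1911.10399 — 5 statements merged into one kernel-verified Lean document; each statement's English description precedes it below -/
import Mathlib

section
/- Let 0 < t < s < d, let μ_n be finite Borel measures on 𝕋^d, and let C be a constant such that for every ball B in 𝕋^d, C^{−1} ≤ liminf_{n→∞} μ_n(B)/λ(B) ≤ limsup_{n→∞} μ_n(B)/λ(B) ≤ C, and such that ∬ |x−y|^{−s} dμ_n(x) dμ_n(y) < C for all n. Then for every dyadic cube D, limsup_{n→∞} ∬_{D×D} |x−y|^{−t} dμ_n(x) dμ_n(y) ≤ C^2 ∬_{D×D} |x−y|^{−t} dx dy. -/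
open MeasureTheory Metric Filter Set
open scoped ENNReal Topology

noncomputable section

/-- The `d`-dimensional torus `ℝ^d / ℤ^d`. -/
abbrev Torus (d : ℕ) := Fin d → AddCircle (1 : ℝ)

/-- The canonical projection `ℝ^d → 𝕋^d`. -/
def torusProj {d : ℕ} (y : Fin d → ℝ) : Torus d := fun i => (y i : AddCircle (1 : ℝ))

/-- A dyadic cube in the torus: the image under the projection `ℝ^d → 𝕋^d` of a product
of intervals `[kᵢ 2^{-n}, (kᵢ+1) 2^{-n})`. -/
def IsDyadicCube {d : ℕ} (D : Set (Torus d)) : Prop :=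
  ∃ (n : ℕ) (k : Fin d → ℤ),
    D = torusProj ''
      (Set.univ.pi fun i => Set.Ico ((k i : ℝ) / 2 ^ n) (((k i : ℝ) + 1) / 2 ^ n))

/-- The outer dyadic content `ℳ_∞^t(E) = inf { Σ_k |D_k|^t : E ⊆ ⋃_k D_k, D_k dyadic }`. -/
noncomputable def dyadicContent {d : ℕ} (t : ℝ) (E : Set (Torus d)) : ℝ≥0∞ :=
  ⨅ (f : ℕ → Set (Torus d)) (_ : ∀ n, IsDyadicCube (f n)) (_ : E ⊆ ⋃ n, f n),
    ∑' n, EMetric.diam (f n) ^ t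

/-- Falconer's class `𝒢^s(𝕋^d)` of sets with large intersections: `G_δ` sets `E` with
`ℳ_∞^t(E ∩ D) ≥ |D|^t` for all dyadic cubes `D` and all `t < s`. -/
def MemLargeIntersectionClass {d : ℕ} (s : ℝ) (E : Set (Torus d)) : Prop :=
  IsGδ E ∧ ∀ D : Set (Torus d), IsDyadicCube D → ∀ t : ℝ, t < s →
    EMetric.diam D ^ t ≤ dyadicContent t (E ∩ D)

namespace ELL

attribute [local instance] ZeroLEOneClass.factZeroLtOne


attribute [local instance] ZeroLEOneClass.factZeroLtOne

abbrev S1 := AddCircle (1:ℝ)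

lemma dist_coe_le (x y : ℝ) : dist ((x:S1)) ((y:S1)) ≤ |x - y| := by
  rw [dist_eq_norm, ← AddCircle.coe_sub, AddCircle.norm_eq]
  simpa using round_le (x - y) 0

def arc (a b : ℝ) : Set S1 := ((↑) : ℝ → S1) '' Ico a b

lemma isOpen_arcOo (a b : ℝ) : IsOpen (((↑) : ℝ → S1) '' Ioo a b) :=
  QuotientAddGroup.isOpenMap_coe _ isOpen_Ioo

lemma measurableSet_arc (a b : ℝ) : MeasurableSet (arc a b) := by
  rcases le_or_gt b a with h | h
  · simp [arc, Ico_eq_empty (not_lt.mpr h)]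
  · have : arc a b = insert ((a : S1)) (((↑) : ℝ → S1) '' Ioo a b) := by
      rw [arc, ← Ioo_union_left h, image_union]
      simp [union_comm]
    rw [this]
    exact ((isOpen_arcOo a b).measurableSet).insert _

end ELL

namespace ELL

lemma coe_eq_coe_iff {x y : ℝ} : (x : S1) = (y : S1) ↔ ∃ k : ℤ, x - y = k := by
  rw [QuotientAddGroup.eq_iff_sub_mem, AddSubgroup.mem_zmultiples_iff]
  constructor
  · rintro ⟨k, hk⟩; exact ⟨k, by simpa using hk.symm⟩
  · rintro ⟨k, hk⟩; exact ⟨k, by simpa using hk.symm⟩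

lemma volume_arc {a b : ℝ} (hab : a ≤ b) (h1 : b ≤ a + 1) :
    volume (arc a b) = ENNReal.ofReal (b - a) := by
  rcases eq_or_lt_of_le hab with rfl | hlt
  · simp [arc]
  rw [AddCircle.add_projection_respects_measure (1:ℝ) a (measurableSet_arc a b)]
  have h2 : Ioo a b ⊆ (QuotientAddGroup.mk ⁻¹' (arc a b) ∩ Ioc a (a + 1)) := by
    intro x hx
    exact ⟨⟨x, ⟨hx.1.le, hx.2⟩, rfl⟩, hx.1, hx.2.le.trans h1⟩
  have h3 : (QuotientAddGroup.mk ⁻¹' (arc a b) ∩ Ioc a (a + 1)) ⊆ Ioo a b ∪ {a + 1} := by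
    rintro x ⟨⟨y, hy, hxy⟩, hx⟩
    have : (x : S1) = (y : S1) := hxy.symm
    obtain ⟨k, hk⟩ := coe_eq_coe_iff.mp this
    have hk1 : (k : ℝ) ≤ 1 := by
      rw [← hk]; linarith [hx.2, hy.1]
    have hk0 : (-1 : ℝ) < k := by
      rw [← hk]; linarith [hx.1, hy.2, h1]
    have hk1' : k ≤ 1 := by exact_mod_cast hk1
    have hk0' : (0:ℤ) ≤ k := by
      have : (-1:ℤ) < k := by exact_mod_cast hk0
      omega
    interval_cases k
    · left
      have : x = y := by have := hk; push_cast at this; linarith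
      exact ⟨hx.1, this ▸ hy.2⟩
    · right
      have : x = y + 1 := by push_cast at hk; linarith
      have hya : y = a := le_antisymm (by linarith [hx.2]) hy.1
      simp [this, hya]
  apply le_antisymm
  · have step1 : volume (QuotientAddGroup.mk ⁻¹' (arc a b) ∩ Ioc a (a + 1)) ≤
        volume (Ioo a b ∪ {a + 1} : Set ℝ) := measure_mono h3
    have step2 : volume (Ioo a b ∪ {a + 1} : Set ℝ) ≤ volume (Ioo a b) + volume ({a+1} : Set ℝ) :=
      measure_union_le _ _
    refine step1.trans (step2.trans ?_)
    rw [Real.volume_Ioo, Real.volume_singleton, add_zero]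
  · have h4 : volume (Ioo a b) ≤ volume (QuotientAddGroup.mk ⁻¹' (arc a b) ∩ Ioc a (a + 1)) :=
      measure_mono h2
    rwa [Real.volume_Ioo] at h4

end ELL

namespace ELL

def darc (m : ℕ) (j : ℤ) : Set S1 := arc ((j:ℝ)/2^m) (((j:ℝ)+1)/2^m)

lemma two_pow_pos (m : ℕ) : (0:ℝ) < 2 ^ m := by positivity

lemma darc_disjoint {m : ℕ} {i i' : ℤ} (hne : i ≠ i') (hwin : |i - i'| < 2^m) :
    Disjoint (darc m i) (darc m i') := by
  rw [Set.disjoint_left]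
  rintro z ⟨x, hx, rfl⟩ ⟨y, hy, hxy⟩
  obtain ⟨k, hk⟩ := coe_eq_coe_iff.mp hxy
  have hp := two_pow_pos m
  have hx1 : (i:ℝ) ≤ x * 2^m := (div_le_iff₀ hp).mp hx.1
  have hx2 : x * 2^m < (i:ℝ) + 1 := by
    have := (lt_div_iff₀ hp).mp hx.2; linarith
  have hy1 : (i':ℝ) ≤ y * 2^m := (div_le_iff₀ hp).mp hy.1
  have hy2 : y * 2^m < (i':ℝ) + 1 := by
    have := (lt_div_iff₀ hp).mp hy.2; linarith
  have hKl : ((i' - i - 1 : ℤ) : ℝ) < ((k * 2^m : ℤ) : ℝ) := by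
    push_cast
    nlinarith [hk]
  have hKr : ((k * 2^m : ℤ) : ℝ) < ((i' - i + 1 : ℤ) : ℝ) := by
    push_cast
    nlinarith [hk]
  have hKl' : i' - i - 1 < k * 2^m := by exact_mod_cast hKl
  have hKr' : k * 2^m < i' - i + 1 := by exact_mod_cast hKr
  have hKeq : k * (2:ℤ)^m = i' - i := by omega
  have hk0 : k = 0 := by
    rcases lt_trichotomy k 0 with h | h | h
    · nlinarith [abs_lt.mp hwin, hKeq, (show k ≤ -1 by omega)]
    · exact h
    · nlinarith [abs_lt.mp hwin, hKeq, (show 1 ≤ k by omega)]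
  rw [hk0] at hKeq
  omega

end ELL

namespace ELL

lemma Ico_div_eq_biUnion (m : ℕ) (a b : ℤ) :
    Ico ((a:ℝ)/2^m) ((b:ℝ)/2^m) = ⋃ i ∈ Finset.Ico a b, Ico ((i:ℝ)/2^m) (((i:ℝ)+1)/2^m) := by
  have hp := two_pow_pos m
  ext x
  simp only [mem_iUnion, Finset.mem_Ico, mem_Ico, exists_prop]
  constructor
  · rintro ⟨h1, h2⟩
    refine ⟨⌊x * 2^m⌋, ⟨Int.le_floor.mpr ((div_le_iff₀ hp).mp h1), Int.floor_lt.mpr ?_⟩,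
      (div_le_iff₀ hp).mpr (Int.floor_le _), (lt_div_iff₀ hp).mpr (Int.lt_floor_add_one _)⟩
    have := (lt_div_iff₀ hp).mp h2
    linarith
  · rintro ⟨i, ⟨hai, hib⟩, h1, h2⟩
    have hai' : (a:ℝ) ≤ i := by exact_mod_cast hai
    have hib' : (i:ℝ) + 1 ≤ b := by exact_mod_cast hib
    constructor
    · exact le_trans (by gcongr) h1
    · exact lt_of_lt_of_le h2 (by gcongr)

lemma darc_eq_biUnion {n m : ℕ} (h : n ≤ m) (j : ℤ) :
    darc n j = ⋃ i ∈ Finset.Ico (j * 2^(m-n)) ((j+1) * 2^(m-n)), darc m i := by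
  have h2 : (2:ℝ)^m = 2^n * 2^(m-n) := by
    rw [← pow_add]; congr 1; omega
  have e1 : ((j:ℝ))/2^n = ((j * 2^(m-n) : ℤ):ℝ)/2^m := by
    push_cast
    rw [h2]
    field_simp
  have e2 : ((j:ℝ)+1)/2^n = (((j+1) * 2^(m-n) : ℤ):ℝ)/2^m := by
    push_cast
    rw [h2]
    field_simp
  rw [darc, arc, e1, e2, Ico_div_eq_biUnion m, image_iUnion₂]
  rfl

lemma image_pi {d : ℕ} (S : Fin d → Set ℝ) :
    torusProj '' univ.pi S = univ.pi (fun i => ((↑) : ℝ → S1) '' (S i)) := by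
  ext z
  constructor
  · rintro ⟨y, hy, rfl⟩ i _
    exact ⟨y i, hy i trivial, rfl⟩
  · intro hz
    choose y hy hyz using fun i => hz i trivial
    exact ⟨y, fun i _ => hy i, funext hyz⟩

end ELL


namespace ELL

attribute [local instance] ZeroLEOneClass.factZeroLtOne

variable {d : ℕ}

/-- dyadic cube at level `m` with multi-index `j` -/
def cube (d : ℕ) (m : ℕ) (j : Fin d → ℤ) : Set (Torus d) := univ.pi fun i => darc m (j i)

lemma measurableSet_cube (m : ℕ) (j : Fin d → ℤ) : MeasurableSet (cube d m j) :=
  MeasurableSet.univ_pi fun i => measurableSet_arc _ _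

lemma volume_darc (m : ℕ) (j : ℤ) : volume (darc m j) = ENNReal.ofReal ((2^m:ℝ)⁻¹) := by
  have hp := two_pow_pos m
  have h1 : (1:ℝ) ≤ 2^m := one_le_pow₀ (by norm_num)
  rw [darc, volume_arc (by gcongr; norm_num) (by rw [div_add' _ _ _ hp.ne', div_le_div_iff_of_pos_right hp]; nlinarith)]
  congr 1
  field_simp
  ring

lemma volume_cube (m : ℕ) (j : Fin d → ℤ) :
    volume (cube d m j) = (ENNReal.ofReal ((2^m:ℝ)⁻¹))^d := by
  rw [cube, volume_pi_pi]
  simp [volume_darc]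

/-- center of a dyadic interval -/
def dcenter (m : ℕ) (j : ℤ) : S1 := (((((j:ℝ)+1/2)/2^m) : ℝ) : S1)

def ccenter (m : ℕ) (j : Fin d → ℤ) : Torus d := fun i => dcenter m (j i)

lemma dist_darc_center {m : ℕ} {j : ℤ} {x : S1} (hx : x ∈ darc m j) :
    dist x (dcenter m j) ≤ (2^m:ℝ)⁻¹/2 := by
  obtain ⟨y, hy, rfl⟩ := hx
  refine (dist_coe_le _ _).trans ?_
  have h1 : (j:ℝ)/2^m ≤ y := hy.1
  have h2 : y < ((j:ℝ)+1)/2^m := hy.2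
  have e : ((j:ℝ)+1/2)/2^m = (j:ℝ)/2^m + (2^m:ℝ)⁻¹/2 := by ring
  have e2 : ((j:ℝ)+1)/2^m = (j:ℝ)/2^m + (2^m:ℝ)⁻¹ := by ring
  rw [e2] at h2
  rw [abs_le, e]
  constructor <;> linarith

end ELL


namespace ELL

attribute [local instance] ZeroLEOneClass.factZeroLtOne

variable {d : ℕ}

lemma dist_cube_center {m : ℕ} {j : Fin d → ℤ} {x : Torus d} (hx : x ∈ cube d m j) :
    dist x (ccenter m j) ≤ (2^m:ℝ)⁻¹/2 :=
  (dist_pi_le_iff (by positivity)).mpr fun i => dist_darc_center (hx i trivial)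

lemma cube_subset_ball {m : ℕ} {j : Fin d → ℤ} {ρ : ℝ} (hρ : (2^m:ℝ)⁻¹/2 < ρ) :
    cube d m j ⊆ ball (ccenter m j) ρ :=
  fun _ hx => mem_ball.mpr (lt_of_le_of_lt (dist_cube_center hx) hρ)

lemma volume_ball_le (z : Torus d) (ρ : ℝ) :
    volume (ball z ρ) ≤ (ENNReal.ofReal (2*ρ))^d := by
  have hsub : ball z ρ ⊆ univ.pi fun i => closedBall (z i) ρ :=
    fun x hx i _ => mem_closedBall.mpr ((dist_le_pi_dist x z i).trans (le_of_lt (mem_ball.mp hx)))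
  calc volume (ball z ρ) ≤ volume (univ.pi fun i => closedBall (z i) ρ) := measure_mono hsub
  _ = ∏ i, volume (closedBall (z i) ρ) := volume_pi_pi _
  _ ≤ ∏ _i : Fin d, ENNReal.ofReal (2*ρ) := by
      refine Finset.prod_le_prod' fun i _ => ?_
      rw [AddCircle.volume_closedBall]
      exact ENNReal.ofReal_le_ofReal (min_le_right _ _)
  _ = (ENNReal.ofReal (2*ρ))^d := by simp

lemma volume_ball_pos (z : Torus d) {ρ : ℝ} (hρ : 0 < ρ) :
    0 < volume (ball z ρ) := by
  have hsub : (univ.pi fun i => closedBall (z i) (ρ/2)) ⊆ ball z ρ := by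
    intro x hx
    rw [mem_ball]
    refine lt_of_le_of_lt ((dist_pi_le_iff (by positivity)).mpr fun i => hx i trivial) (by linarith)
  refine lt_of_lt_of_le ?_ (measure_mono hsub)
  rw [volume_pi_pi]
  have : ∀ i : Fin d, volume (closedBall (z i) (ρ/2)) = ENNReal.ofReal (min 1 ρ) := by
    intro i
    rw [AddCircle.volume_closedBall, show 2*(ρ/2) = ρ by ring]
  simp only [this, Finset.prod_const]
  have : (0:ℝ) < min 1 ρ := lt_min one_pos hρ
  positivity

lemma cube_disjoint {m : ℕ} {j j' : Fin d → ℤ} (hne : j ≠ j') (hwin : ∀ i, |j i - j' i| < 2^m) :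
    Disjoint (cube d m j) (cube d m j') := by
  obtain ⟨i, hi⟩ := Function.ne_iff.mp hne
  rw [Set.disjoint_left]
  intro x hx hx'
  exact (darc_disjoint hi (hwin i)).le_bot ⟨hx i trivial, hx' i trivial⟩

lemma finset_biUnion_eq_iUnion {α : Type*} (s : Finset ℤ) (t : ℤ → Set α) :
    ⋃ a ∈ s, t a = ⋃ a : {x // x ∈ s}, t (a : ℤ) := by
  ext x; simp

lemma cube_eq_iUnion {n₀ m : ℕ} (h : n₀ ≤ m) (k : Fin d → ℤ) :
    cube d n₀ k = ⋃ (f : ∀ i : Fin d, {a : ℤ // a ∈ Finset.Ico (k i * 2^(m-n₀)) ((k i + 1) * 2^(m-n₀))}),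
      cube d m (fun i => (f i : ℤ)) := by
  have hco : ∀ i, darc n₀ (k i) =
      ⋃ a : {a : ℤ // a ∈ Finset.Ico (k i * 2^(m-n₀)) ((k i + 1) * 2^(m-n₀))}, darc m (a : ℤ) := by
    intro i
    rw [darc_eq_biUnion h (k i), finset_biUnion_eq_iUnion]
  rw [cube]
  simp_rw [hco]
  rw [← Set.iUnion_univ_pi]
  rfl

lemma cube_pieces_disjoint {n₀ m : ℕ} (h : n₀ ≤ m) (k : Fin d → ℤ) :
    Pairwise (Function.onFun Disjoint
      (fun f : (∀ i : Fin d, {a : ℤ // a ∈ Finset.Ico (k i * 2^(m-n₀)) ((k i + 1) * 2^(m-n₀))}) =>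
        cube d m (fun i => (f i : ℤ)))) := by
  intro f g hfg
  obtain ⟨i, hi⟩ := Function.ne_iff.mp hfg
  refine cube_disjoint (Function.ne_iff.mpr ⟨i, by exact_mod_cast Subtype.coe_ne_coe.mpr hi⟩) ?_
  intro i'
  have h1 := Finset.mem_Ico.mp (f i').2
  have h2 := Finset.mem_Ico.mp (g i').2
  have hpow : (2:ℤ)^(m-n₀) ≤ 2^m := pow_le_pow_right₀ (by norm_num) (by omega)
  have hw1 : (k i' + 1) * 2^(m-n₀) = k i' * 2^(m-n₀) + 2^(m-n₀) := by ring
  rw [abs_lt]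
  omega

end ELL


namespace ELL

attribute [local instance] ZeroLEOneClass.factZeroLtOne

variable {d : ℕ}

lemma rpow_neg_antitone {t : ℝ} (ht : 0 ≤ t) {a b : ℝ≥0∞} (h : a ≤ b) :
    b ^ (-t) ≤ a ^ (-t) := by
  rw [ENNReal.rpow_neg, ENNReal.rpow_neg]
  exact ENNReal.inv_le_inv.mpr (ENNReal.rpow_le_rpow h ht)

lemma kernel_near {t s : ℝ} (ht0 : 0 < t) (hts : t < s) {e r : ℝ≥0∞} (he : e ≠ ⊤)
    (hr0 : r ≠ 0) (her : e ≤ r) : e ^ (-t) ≤ r ^ (s-t) * e ^ (-s) := by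
  rcases eq_or_ne e 0 with rfl | he0
  · rw [ENNReal.zero_rpow_of_neg (by linarith), ENNReal.zero_rpow_of_neg (by linarith),
      ENNReal.mul_top (by simp [ENNReal.rpow_eq_zero_iff, hr0]; intro h; linarith)]
  · have hrw : e ^ (-t) = e ^ (s-t) * e ^ (-s) := by
      rw [← ENNReal.rpow_add _ _ he0 he]
      ring_nf
    rw [hrw]
    exact mul_le_mul_left (ENNReal.rpow_le_rpow her (by linarith)) _

lemma kernel_comp {t : ℝ} (ht : 0 ≤ t) {a b c : ℝ≥0∞} (hc0 : c ≠ 0) (hctop : c ≠ ⊤)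
    (hb : b ≠ ⊤) (h : a ≤ c * b) : b ^ (-t) ≤ c ^ t * a ^ (-t) := by
  have h1 : (c*b) ^ (-t) ≤ a ^ (-t) := rpow_neg_antitone ht h
  have h2 : (c*b) ^ (-t) = c ^ (-t) * b ^ (-t) := ENNReal.mul_rpow_of_ne_top hctop hb _
  have h3 : c ^ t * c ^ (-t) = 1 := by
    rw [← ENNReal.rpow_add _ _ hc0 hctop]
    simp
  calc b ^ (-t) = (c ^ t * c ^ (-t)) * b ^ (-t) := by rw [h3, one_mul]
  _ = c ^ t * ((c*b) ^ (-t)) := by rw [h2]; ring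
  _ ≤ c ^ t * a ^ (-t) := mul_le_mul_right h1 _

lemma measurable_kernel (t : ℝ) :
    Measurable (Function.uncurry fun (x y : Torus d) => edist x y ^ (-t)) :=
  ENNReal.continuous_rpow_const.measurable.comp measurable_edist

lemma split_lintegral (ν : Measure (Torus d)) [SFinite ν] {ι : Type*} [Fintype ι]
    (Q : ι → Set (Torus d)) (hmeas : ∀ f, MeasurableSet (Q f))
    (hdisj : Pairwise (Function.onFun Disjoint Q)) (t : ℝ) :
    ∫⁻ x in ⋃ f, Q f, ∫⁻ y in ⋃ f, Q f, edist x y ^ (-t) ∂ν ∂ν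
      = ∑ f : ι, ∑ g : ι, ∫⁻ x in Q f, ∫⁻ y in Q g, edist x y ^ (-t) ∂ν ∂ν := by
  have inner : ∀ x : Torus d, ∫⁻ y in ⋃ g, Q g, edist x y ^ (-t) ∂ν
      = ∑ g : ι, ∫⁻ y in Q g, edist x y ^ (-t) ∂ν := fun x => by
    rw [lintegral_iUnion hmeas hdisj, tsum_fintype]
  simp_rw [inner]
  rw [lintegral_iUnion hmeas hdisj, tsum_fintype]
  refine Finset.sum_congr rfl fun f _ => ?_
  refine lintegral_finset_sum' _ fun g _ => Measurable.aemeasurable ?_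
  exact (measurable_kernel (d := d) t).lintegral_prod_right' (ν := ν.restrict (Q g))

end ELL


namespace ELL

attribute [local instance] ZeroLEOneClass.factZeroLtOne

lemma key_estimate
    (d : ℕ) (hd : 0 < d) (t s : ℝ) (ht : 0 < t) (hts : t < s)
    (μ : ℕ → Measure (Torus d)) (hfin : ∀ n, IsFiniteMeasure (μ n))
    (C : ℝ≥0∞) (hCtop : C < ⊤)
    (hhigh : ∀ (z : Torus d) (ρ : ℝ), 0 < ρ →
      limsup (fun n => μ n (ball z ρ) / volume (ball z ρ)) atTop ≤ C)
    (henergy : ∀ n, (∫⁻ x, ∫⁻ y, edist x y ^ (-s) ∂(μ n) ∂(μ n)) < C)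
    (n₀ : ℕ) (k : Fin d → ℤ) (u : ℝ) (hu : 0 < u) (m : ℕ) (hm : n₀ ≤ m) :
    limsup (fun n => ∫⁻ x in cube d n₀ k, ∫⁻ y in cube d n₀ k,
        edist x y ^ (-t) ∂(μ n) ∂(μ n)) atTop ≤
      ENNReal.ofReal ((2/u+4) * (2^m:ℝ)⁻¹) ^ (s-t) * C
        + ENNReal.ofReal (1+u) ^ t * ((C + ENNReal.ofReal u) * ENNReal.ofReal (1+u) ^ d)^2
          * ∫⁻ x in cube d n₀ k, ∫⁻ y in cube d n₀ k, edist x y ^ (-t) ∂volume ∂volume := by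
  haveI : ∀ n, SFinite (μ n) := fun n => by haveI := hfin n; infer_instance
  set η : ℝ := (2^m:ℝ)⁻¹ with hηdef
  have hη : 0 < η := by positivity
  set ι := ∀ i : Fin d, {a : ℤ // a ∈ Finset.Ico (k i * 2^(m-n₀)) ((k i + 1) * 2^(m-n₀))} with hιdef
  set Q : ι → Set (Torus d) := fun f => cube d m (fun i => (f i : ℤ)) with hQdef
  set cc : ι → Torus d := fun f => ccenter m (fun i => (f i : ℤ)) with hccdef
  have hQm : ∀ f, MeasurableSet (Q f) := fun f => measurableSet_cube _ _
  have hQd : Pairwise (Function.onFun Disjoint Q) := cube_pieces_disjoint hm k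
  have hDQ : cube d n₀ k = ⋃ f, Q f := cube_eq_iUnion hm k
  set V : ℝ≥0∞ := ENNReal.ofReal η ^ d with hVdef
  have hQvol : ∀ f, volume (Q f) = V := fun f => volume_cube m _
  have hV0 : V ≠ 0 := by
    simp only [hVdef]
    positivity
  have hVtop : V ≠ ⊤ := by
    simp only [hVdef]
    exact ENNReal.pow_ne_top ENNReal.ofReal_ne_top
  set A : ℝ≥0∞ := ENNReal.ofReal (1+u) ^ t with hAdef
  set B : ℝ≥0∞ := (C + ENNReal.ofReal u) * ENNReal.ofReal (1+u) ^ d with hBdef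
  set r : ℝ≥0∞ := ENNReal.ofReal ((2/u+4) * η) with hrdef
  have hr0 : r ≠ 0 := by
    simp only [hrdef, ne_eq, ENNReal.ofReal_eq_zero, not_le]
    positivity
  -- distance from a point of Q f to its center
  have hdc : ∀ (f : ι) (x : Torus d), x ∈ Q f → dist x (cc f) ≤ η/2 :=
    fun f x hx => dist_cube_center hx
  -- eventual measure bound on the pieces
  have hmub : ∀ f : ι, ∀ᶠ n in atTop, μ n (Q f) ≤ B * V := by
    intro f
    set ρ : ℝ := (1+u)*η/2 with hρdef
    have hρpos : 0 < ρ := by positivity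
    have hsubset : Q f ⊆ ball (cc f) ρ := by
      refine cube_subset_ball ?_
      rw [hρdef, hηdef]
      rw [div_lt_div_iff_of_pos_right (by norm_num)]
      nlinarith [hη]
    have hvb : volume (ball (cc f) ρ) ≤ ENNReal.ofReal (1+u) ^ d * V := by
      refine (volume_ball_le _ _).trans ?_
      have h2ρ : 2*ρ = (1+u)*η := by rw [hρdef]; ring
      rw [h2ρ, ENNReal.ofReal_mul (by linarith), hVdef, mul_pow]
    have hb0 : volume (ball (cc f) ρ) ≠ 0 := (volume_ball_pos _ hρpos).ne'
    have hbtop : volume (ball (cc f) ρ) ≠ ⊤ := by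
      refine ne_top_of_le_ne_top ?_ (volume_ball_le _ ρ)
      exact ENNReal.pow_ne_top ENNReal.ofReal_ne_top
    have hltC : limsup (fun n => μ n (ball (cc f) ρ) / volume (ball (cc f) ρ)) atTop
        < C + ENNReal.ofReal u :=
      lt_of_le_of_lt (hhigh (cc f) ρ hρpos)
        (ENNReal.lt_add_right hCtop.ne (by simp [ENNReal.ofReal_eq_zero]; linarith))
    filter_upwards [Filter.eventually_lt_of_limsup_lt hltC] with n hn
    have h1 : μ n (ball (cc f) ρ) < (C + ENNReal.ofReal u) * volume (ball (cc f) ρ) :=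
      (ENNReal.div_lt_iff (Or.inl hb0) (Or.inl hbtop)).mp hn
    calc μ n (Q f) ≤ μ n (ball (cc f) ρ) := measure_mono hsubset
    _ ≤ (C + ENNReal.ofReal u) * volume (ball (cc f) ρ) := h1.le
    _ ≤ (C + ENNReal.ofReal u) * (ENNReal.ofReal (1+u) ^ d * V) := mul_le_mul_right hvb _
    _ = B * V := by rw [hBdef]; ring
  have hall : ∀ᶠ n in atTop, ∀ f : ι, μ n (Q f) ≤ B * V := eventually_all.mpr hmub
  -- the main eventual bound
  refine limsup_le_of_le (by isBoundedDefault) ?_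
  filter_upwards [hall] with n hn
  rw [hDQ, split_lintegral (μ n) Q hQm hQd t, split_lintegral volume Q hQm hQd t]
  have pair_bound : ∀ f g : ι,
      (∫⁻ x in Q f, ∫⁻ y in Q g, edist x y ^ (-t) ∂(μ n) ∂(μ n)) ≤
        r ^ (s-t) * (∫⁻ x in Q f, ∫⁻ y in Q g, edist x y ^ (-s) ∂(μ n) ∂(μ n))
        + A * B^2 * (∫⁻ x in Q f, ∫⁻ y in Q g, edist x y ^ (-t) ∂volume ∂volume) := by
    intro f g
    by_cases hnear : dist (cc f) (cc g) ≤ (2/u+2)*η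
    · -- near pair: use the s-energy
      refine le_trans ?_ (self_le_add_right _ _)
      have hpt : ∀ x ∈ Q f, ∀ y ∈ Q g, edist x y ^ (-t) ≤ r ^ (s-t) * edist x y ^ (-s) := by
        intro x hx y hy
        refine kernel_near ht hts (edist_ne_top x y) hr0 ?_
        rw [edist_dist, hrdef]
        refine ENNReal.ofReal_le_ofReal ?_
        calc dist x y ≤ dist x (cc f) + dist (cc f) (cc g) + dist (cc g) y :=
          dist_triangle4 x (cc f) (cc g) y
        _ ≤ η/2 + (2/u+2)*η + η/2 := by
            gcongr
            · exact hdc f x hx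
            · rw [dist_comm]; exact hdc g y hy
        _ ≤ (2/u+4) * η := by nlinarith [hη]
      have hrst : r ^ (s-t) ≠ ⊤ := ENNReal.rpow_ne_top_of_nonneg (by linarith) ENNReal.ofReal_ne_top
      calc (∫⁻ x in Q f, ∫⁻ y in Q g, edist x y ^ (-t) ∂(μ n) ∂(μ n))
          ≤ (∫⁻ x in Q f, r ^ (s-t) * ∫⁻ y in Q g, edist x y ^ (-s) ∂(μ n) ∂(μ n)) := by
            refine setLIntegral_mono' (hQm f) fun x hx => ?_
            rw [← lintegral_const_mul' _ _ hrst]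
            exact setLIntegral_mono' (hQm g) fun y hy => hpt x hx y hy
      _ = r ^ (s-t) * (∫⁻ x in Q f, ∫⁻ y in Q g, edist x y ^ (-s) ∂(μ n) ∂(μ n)) :=
            lintegral_const_mul' _ _ hrst
    · -- far pair: compare with Lebesgue
      push_neg at hnear
      refine le_trans ?_ (self_le_add_left _ _)
      -- comparability of the kernel at pairs of points
      have hcomp : ∀ x ∈ Q f, ∀ y ∈ Q g, ∀ x' ∈ Q f, ∀ y' ∈ Q g,
          edist x' y' ^ (-t) ≤ A * edist x y ^ (-t) := by
        intro x hx y hy x' hx' y' hy'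
        have hxx' : dist x x' ≤ η := by
          calc dist x x' ≤ dist x (cc f) + dist (cc f) x' := dist_triangle _ _ _
          _ ≤ η/2 + η/2 := by
              gcongr
              · exact hdc f x hx
              · rw [dist_comm]; exact hdc f x' hx'
          _ = η := by ring
        have hyy' : dist y' y ≤ η := by
          calc dist y' y ≤ dist y' (cc g) + dist (cc g) y := dist_triangle _ _ _
          _ ≤ η/2 + η/2 := by
              gcongr
              · exact hdc g y' hy'
              · rw [dist_comm]; exact hdc g y hy
          _ = η := by ring
        have hlow : (2/u)*η ≤ dist x' y' := by
          have : dist (cc f) (cc g) ≤ dist (cc f) x' + dist x' y' + dist y' (cc g) :=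
            dist_triangle4 _ _ _ _
          have h1 : dist (cc f) x' ≤ η/2 := by rw [dist_comm]; exact hdc f x' hx'
          have h2 : dist y' (cc g) ≤ η/2 := hdc g y' hy'
          nlinarith [hnear]
        have hmain : dist x y ≤ (1+u) * dist x' y' := by
          have : dist x y ≤ dist x x' + dist x' y' + dist y' y := dist_triangle4 _ _ _ _
          have h2u : 2*η ≤ u * dist x' y' := by
            calc 2*η = u * ((2/u)*η) := by field_simp
            _ ≤ u * dist x' y' := by gcongr
          nlinarith
        refine kernel_comp ht.le (c := ENNReal.ofReal (1+u)) ?_ ENNReal.ofReal_ne_top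
          (edist_ne_top x' y') ?_
        · simp only [ne_eq, ENNReal.ofReal_eq_zero, not_le]; linarith
        · rw [edist_dist, edist_dist, ← ENNReal.ofReal_mul (by linarith)]
          exact ENNReal.ofReal_le_ofReal hmain
      -- step 1 : pointwise bound on the piece
      have step1 : ∀ x ∈ Q f, ∀ y ∈ Q g,
          (∫⁻ x' in Q f, ∫⁻ y' in Q g, edist x' y' ^ (-t) ∂(μ n) ∂(μ n)) ≤
            A * edist x y ^ (-t) * (B*V) * (B*V) := by
        intro x hx y hy
        calc (∫⁻ x' in Q f, ∫⁻ y' in Q g, edist x' y' ^ (-t) ∂(μ n) ∂(μ n))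
            ≤ (∫⁻ _x' in Q f, (A * edist x y ^ (-t)) * μ n (Q g) ∂(μ n)) := by
              refine setLIntegral_mono measurable_const fun x' hx' => ?_
              rw [← setLIntegral_const (Q g) (A * edist x y ^ (-t))]
              exact setLIntegral_mono' (hQm g) fun y' hy' => hcomp x hx y hy x' hx' y' hy'
        _ = (A * edist x y ^ (-t)) * μ n (Q g) * μ n (Q f) := setLIntegral_const _ _
        _ ≤ (A * edist x y ^ (-t)) * (B*V) * (B*V) := by
              gcongr
              · exact hn g
              · exact hn f
        _ = A * edist x y ^ (-t) * (B*V) * (B*V) := by ring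
      -- step 2 : integrate over the cubes with respect to volume
      have hAtop : A ≠ ⊤ := ENNReal.rpow_ne_top_of_nonneg ht.le ENNReal.ofReal_ne_top
      have hBtop : B ≠ ⊤ :=
        ENNReal.mul_ne_top (by simp [ENNReal.add_ne_top, hCtop.ne])
          (ENNReal.pow_ne_top ENNReal.ofReal_ne_top)
      have hconst_top : A*(B*V)*(B*V) ≠ ⊤ :=
        ENNReal.mul_ne_top (ENNReal.mul_ne_top hAtop (ENNReal.mul_ne_top hBtop hVtop))
          (ENNReal.mul_ne_top hBtop hVtop)
      have e1 : ∀ (c : ℝ≥0∞), (∫⁻ _x in Q f, (∫⁻ _y in Q g, c ∂volume) ∂volume) = c * (V * V) := by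
        intro c
        rw [setLIntegral_const, setLIntegral_const, hQvol, hQvol]
        ring
      have step2 : (∫⁻ x' in Q f, ∫⁻ y' in Q g, edist x' y' ^ (-t) ∂(μ n) ∂(μ n)) * (V * V) ≤
          (A * B^2 * (∫⁻ x in Q f, ∫⁻ y in Q g, edist x y ^ (-t) ∂volume ∂volume)) * (V * V) := by
        calc (∫⁻ x' in Q f, ∫⁻ y' in Q g, edist x' y' ^ (-t) ∂(μ n) ∂(μ n)) * (V * V)
            = ∫⁻ _x in Q f, (∫⁻ _y in Q g,
                (∫⁻ x' in Q f, ∫⁻ y' in Q g, edist x' y' ^ (-t) ∂(μ n) ∂(μ n))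
                  ∂volume) ∂volume := (e1 _).symm
        _ ≤ ∫⁻ x in Q f, (∫⁻ y in Q g, (A*(B*V)*(B*V)) * edist x y ^ (-t) ∂volume) ∂volume := by
            refine setLIntegral_mono' (hQm f) fun x hx => ?_
            refine setLIntegral_mono' (hQm g) fun y hy => ?_
            calc (∫⁻ x' in Q f, ∫⁻ y' in Q g, edist x' y' ^ (-t) ∂(μ n) ∂(μ n))
                ≤ A * edist x y ^ (-t) * (B*V) * (B*V) := step1 x hx y hy
            _ = (A*(B*V)*(B*V)) * edist x y ^ (-t) := by ring
        _ = (A*(B*V)*(B*V)) * (∫⁻ x in Q f, ∫⁻ y in Q g, edist x y ^ (-t) ∂volume ∂volume) := by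
            rw [← lintegral_const_mul' _ _ hconst_top]
            congr 1
            ext x
            rw [← lintegral_const_mul' _ _ hconst_top]
        _ = (A * B^2 * (∫⁻ x in Q f, ∫⁻ y in Q g, edist x y ^ (-t) ∂volume ∂volume)) * (V * V) := by
            ring
      exact (ENNReal.mul_le_mul_iff_left
        (by simp [hV0]) (ENNReal.mul_ne_top hVtop hVtop)).mp step2
  calc (∑ f : ι, ∑ g : ι, ∫⁻ x in Q f, ∫⁻ y in Q g, edist x y ^ (-t) ∂(μ n) ∂(μ n))
      ≤ ∑ f : ι, ∑ g : ι, (r ^ (s-t) * (∫⁻ x in Q f, ∫⁻ y in Q g, edist x y ^ (-s) ∂(μ n) ∂(μ n))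
        + A * B^2 * (∫⁻ x in Q f, ∫⁻ y in Q g, edist x y ^ (-t) ∂volume ∂volume)) := by
        exact Finset.sum_le_sum fun f _ => Finset.sum_le_sum fun g _ => pair_bound f g
  _ = r ^ (s-t) * (∑ f : ι, ∑ g : ι, ∫⁻ x in Q f, ∫⁻ y in Q g, edist x y ^ (-s) ∂(μ n) ∂(μ n))
        + A * B^2 * (∑ f : ι, ∑ g : ι, ∫⁻ x in Q f, ∫⁻ y in Q g, edist x y ^ (-t) ∂volume ∂volume) := by
        simp only [Finset.sum_add_distrib, Finset.mul_sum]
  _ ≤ r ^ (s-t) * C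
        + A * B^2 * (∑ f : ι, ∑ g : ι, ∫⁻ x in Q f, ∫⁻ y in Q g, edist x y ^ (-t) ∂volume ∂volume) := by
        gcongr
        rw [← split_lintegral (μ n) Q hQm hQd s]
        refine le_of_lt (lt_of_le_of_lt ?_ (henergy n))
        refine (setLIntegral_le_lintegral _ _).trans ?_
        refine lintegral_mono fun x => setLIntegral_le_lintegral _ _

end ELL


/-- **Lemma 3 (energy limit lemma).** If `0 < t < s < d`, the measures `μ_n` have density
ratios on balls asymptotically bounded between `C⁻¹` and `C` and `s`-energies bounded by `C`,
then for every dyadic cube `D`,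
`limsup_n ∬_{D×D} |x-y|^{-t} dμ_n dμ_n ≤ C² ∬_{D×D} |x-y|^{-t} dx dy`. -/
theorem energy_limit_lemma
    (d : ℕ) (hd : 0 < d) (t s : ℝ) (ht : 0 < t) (hts : t < s) (hsd : s < d)
    (μ : ℕ → Measure (Torus d)) (hfin : ∀ n, IsFiniteMeasure (μ n))
    (C : ℝ≥0∞) (hC0 : 0 < C) (hCtop : C < ⊤)
    (hlow : ∀ (z : Torus d) (ρ : ℝ), 0 < ρ →
      C⁻¹ ≤ liminf (fun n => μ n (ball z ρ) / volume (ball z ρ)) atTop)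
    (hhigh : ∀ (z : Torus d) (ρ : ℝ), 0 < ρ →
      limsup (fun n => μ n (ball z ρ) / volume (ball z ρ)) atTop ≤ C)
    (henergy : ∀ n, (∫⁻ x, ∫⁻ y, edist x y ^ (-s) ∂(μ n) ∂(μ n)) < C)
    (D : Set (Torus d)) (hD : IsDyadicCube D) :
    limsup (fun n => ∫⁻ x in D, ∫⁻ y in D, edist x y ^ (-t) ∂(μ n) ∂(μ n)) atTop ≤
      C ^ 2 * ∫⁻ x in D, ∫⁻ y in D, edist x y ^ (-t) ∂volume ∂volume := by
  classical
  obtain ⟨n₀, k, hDeq⟩ := hD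
  have hDc : D = ELL.cube d n₀ k := by
    rw [hDeq, ELL.image_pi]
    rfl
  rw [hDc]
  set I := ∫⁻ x in ELL.cube d n₀ k, ∫⁻ y in ELL.cube d n₀ k, edist x y ^ (-t) ∂volume ∂volume
    with hIdef
  set L := limsup (fun n => ∫⁻ x in ELL.cube d n₀ k, ∫⁻ y in ELL.cube d n₀ k,
      edist x y ^ (-t) ∂(μ n) ∂(μ n)) atTop with hLdef
  have stepA : ∀ u : ℝ, 0 < u → L ≤
      ENNReal.ofReal (1+u) ^ t * ((C + ENNReal.ofReal u) * ENNReal.ofReal (1+u) ^ d)^2 * I := by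
    intro u hu
    set T := ENNReal.ofReal (1+u) ^ t * ((C + ENNReal.ofReal u) * ENNReal.ofReal (1+u) ^ d)^2 * I
      with hTdef
    have hkey : ∀ m : ℕ, n₀ ≤ m →
        L ≤ ENNReal.ofReal ((2/u+4) * (2^m:ℝ)⁻¹) ^ (s-t) * C + T :=
      fun m hm => ELL.key_estimate d hd t s ht hts μ hfin C hCtop hhigh henergy n₀ k u hu m hm
    have h1 : Tendsto (fun m : ℕ => ((2/u+4) * (2^m:ℝ)⁻¹)) atTop (𝓝 0) := by
      have h2 : Tendsto (fun m : ℕ => ((2:ℝ)^m)⁻¹) atTop (𝓝 0) :=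
        tendsto_inv_atTop_zero.comp (tendsto_pow_atTop_atTop_of_one_lt one_lt_two)
      simpa using h2.const_mul (2/u+4)
    have h3 : Tendsto (fun m : ℕ => ENNReal.ofReal ((2/u+4) * (2^m:ℝ)⁻¹) ^ (s-t)) atTop (𝓝 0) := by
      have h4 : Tendsto (fun m : ℕ => ENNReal.ofReal ((2/u+4) * (2^m:ℝ)⁻¹)) atTop (𝓝 0) := by
        have := (ENNReal.continuous_ofReal.tendsto 0).comp h1
        simpa [Function.comp_def] using this
      have h5 := ((ENNReal.continuous_rpow_const (y := s - t)).tendsto (0:ℝ≥0∞)).comp h4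
      simp only [Function.comp_def] at h5
      rwa [ENNReal.zero_rpow_of_pos (by linarith)] at h5
    have h6 : Tendsto (fun m : ℕ => ENNReal.ofReal ((2/u+4) * (2^m:ℝ)⁻¹) ^ (s-t) * C + T)
        atTop (𝓝 T) := by
      have h7 := ENNReal.Tendsto.mul_const h3 (Or.inr hCtop.ne)
      rw [zero_mul] at h7
      have h8 := h7.add (tendsto_const_nhds : Tendsto (fun _ : ℕ => T) atTop (𝓝 T))
      rwa [zero_add] at h8
    refine ge_of_tendsto h6 ?_
    filter_upwards [eventually_ge_atTop n₀] with m hm using hkey m hm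
  by_cases hIC : C ^ 2 * I = ⊤
  · rw [hIC]; exact le_top
  have hC2 : C ^ 2 ≠ 0 := pow_ne_zero 2 hC0.ne'
  have hIt : I ≠ ⊤ := by
    intro h
    rw [h, ENNReal.mul_top hC2] at hIC
    exact hIC rfl
  have hsplit : ∀ u : ℝ, 0 < u →
      ENNReal.ofReal (1+u) ^ t * ((C + ENNReal.ofReal u) * ENNReal.ofReal (1+u) ^ d)^2 * I =
        ENNReal.ofReal (1+u) ^ (t+2*(d:ℝ)) *
          ((C + ENNReal.ofReal u) * ((C + ENNReal.ofReal u) * I)) := by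
    intro u hu
    have ha0 : ENNReal.ofReal (1+u) ≠ 0 := by
      simp only [ne_eq, ENNReal.ofReal_eq_zero, not_le]; linarith
    rw [ENNReal.rpow_add _ _ ha0 ENNReal.ofReal_ne_top,
      show (2*(d:ℝ)) = ((2*d : ℕ):ℝ) by push_cast; ring, ENNReal.rpow_natCast]
    ring
  have hLu : ∀ j : ℕ, L ≤ ENNReal.ofReal (1+(1:ℝ)/(j+1)) ^ (t+2*(d:ℝ)) *
      ((C + ENNReal.ofReal ((1:ℝ)/(j+1))) * ((C + ENNReal.ofReal ((1:ℝ)/(j+1))) * I)) := by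
    intro j
    have hj : (0:ℝ) < 1/(j+1) := by positivity
    rw [← hsplit _ hj]
    exact stepA _ hj
  have hu0 : Tendsto (fun j : ℕ => (1:ℝ)/(j+1)) atTop (𝓝 0) :=
    tendsto_one_div_add_atTop_nhds_zero_nat
  have ha1 : Tendsto (fun j : ℕ => ENNReal.ofReal (1+(1:ℝ)/(j+1))) atTop (𝓝 1) := by
    have h0' := hu0.const_add (1:ℝ)
    rw [add_zero] at h0'
    have := (ENNReal.continuous_ofReal.tendsto 1).comp h0'
    simpa [Function.comp_def] using this
  have hg1 : Tendsto (fun j : ℕ => ENNReal.ofReal (1+(1:ℝ)/(j+1)) ^ (t+2*(d:ℝ))) atTop (𝓝 1) := by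
    have := ((ENNReal.continuous_rpow_const (y := t+2*(d:ℝ))).tendsto (1:ℝ≥0∞)).comp ha1
    simp only [Function.comp_def] at this
    rwa [ENNReal.one_rpow] at this
  have hCj : Tendsto (fun j : ℕ => C + ENNReal.ofReal ((1:ℝ)/(j+1))) atTop (𝓝 C) := by
    have h9 : Tendsto (fun j : ℕ => ENNReal.ofReal ((1:ℝ)/(j+1))) atTop (𝓝 0) := by
      have := (ENNReal.continuous_ofReal.tendsto 0).comp hu0
      simpa [Function.comp_def] using this
    have := (tendsto_const_nhds : Tendsto (fun _ : ℕ => C) atTop (𝓝 C)).add h9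
    rwa [add_zero] at this
  have hg2 : Tendsto (fun j : ℕ => (C + ENNReal.ofReal ((1:ℝ)/(j+1))) *
      ((C + ENNReal.ofReal ((1:ℝ)/(j+1))) * I)) atTop (𝓝 (C * (C * I))) := by
    have hCI : Tendsto (fun j : ℕ => (C + ENNReal.ofReal ((1:ℝ)/(j+1))) * I) atTop (𝓝 (C * I)) :=
      ENNReal.Tendsto.mul_const hCj (Or.inr hIt)
    exact ENNReal.Tendsto.mul hCj (Or.inr (ENNReal.mul_ne_top hCtop.ne hIt)) hCI
      (Or.inr hCtop.ne)
  have hG : Tendsto (fun j : ℕ => ENNReal.ofReal (1+(1:ℝ)/(j+1)) ^ (t+2*(d:ℝ)) *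
      ((C + ENNReal.ofReal ((1:ℝ)/(j+1))) * ((C + ENNReal.ofReal ((1:ℝ)/(j+1))) * I)))
      atTop (𝓝 (C ^ 2 * I)) := by
    have := ENNReal.Tendsto.mul hg1 (Or.inl one_ne_zero) hg2
      (Or.inr (by simp : (1:ℝ≥0∞) ≠ ⊤))
    rwa [one_mul, show C * (C * I) = C ^ 2 * I by ring] at this
  exact ge_of_tendsto hG (Filter.Eventually.of_forall hLu)
end
end

section
/- Let U ⊂ ℝ^d be a Borel set with 0 < λ(U) < ∞ and let 0 < t < d be such that I_t(U) < ∞. Then the t-dimensional Hausdorff content of U satisfies ℋ_∞^t(U) ≥ λ(U)^2 / I_t(U); equivalently, for every countable cover (U_k) of U one has Σ_k |U_k|^t ≥ λ(U)^2 / I_t(U). -/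
open MeasureTheory Filter Set
open scoped ENNReal Topology

noncomputable section

/-- The `t`-dimensional Riesz energy of a set `U ⊆ ℝ^d`,
`I_t(U) = ∫_U ∫_U |x - y|^{-t} dx dy`. -/
noncomputable def rieszEnergyR (d : ℕ) (t : ℝ) (U : Set (EuclideanSpace ℝ (Fin d))) : ℝ≥0∞ :=
  ∫⁻ x in U, ∫⁻ y in U, edist x y ^ (-t) ∂volume ∂volume

/-- The `t`-dimensional Hausdorff content
`ℋ_∞^t(E) = inf { Σ_k |U_k|^t : E ⊆ ⋃_k U_k }`. -/
noncomputable def hausdorffContent (d : ℕ) (t : ℝ) (E : Set (EuclideanSpace ℝ (Fin d))) :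
    ℝ≥0∞ :=
  ⨅ (f : ℕ → Set (EuclideanSpace ℝ (Fin d))) (_ : E ⊆ ⋃ k, f k),
    ∑' k, EMetric.diam (f k) ^ t

/-- **Lower bound for Hausdorff content via Riesz energy.** For a Borel set `U ⊆ ℝ^d` of
positive finite Lebesgue measure and `0 < t < d` with `I_t(U) < ∞`, one has
`ℋ_∞^t(U) ≥ λ(U)² / I_t(U)`; equivalently, every countable cover `(U_k)` of `U`
satisfies `Σ_k |U_k|^t ≥ λ(U)² / I_t(U)`. -/
theorem hausdorffContent_ge_of_rieszEnergy
    (d : ℕ) (hd : 0 < d)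
    (U : Set (EuclideanSpace ℝ (Fin d))) (hU : MeasurableSet U)
    (hU0 : 0 < volume U) (hUfin : volume U < ⊤)
    (t : ℝ) (ht0 : 0 < t) (htd : t < d)
    (hI : rieszEnergyR d t U < ⊤) :
    volume U ^ 2 / rieszEnergyR d t U ≤ hausdorffContent d t U ∧
      ∀ f : ℕ → Set (EuclideanSpace ℝ (Fin d)), U ⊆ ⋃ k, f k →
        volume U ^ 2 / rieszEnergyR d t U ≤ ∑' k, EMetric.diam (f k) ^ t := by
  have main : ∀ f : ℕ → Set (EuclideanSpace ℝ (Fin d)), U ⊆ ⋃ k, f k →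
      volume U ^ 2 / rieszEnergyR d t U ≤ ∑' k, EMetric.diam (f k) ^ t := by
    intro f hf
    by_cases hS : ∑' k, EMetric.diam (f k) ^ t = ⊤
    · rw [hS]; exact le_top
    have hDt : ∀ k, EMetric.diam (f k) ^ t ≠ ⊤ := ENNReal.ne_top_of_tsum_ne_top hS
    have hD : ∀ k, EMetric.diam (f k) ≠ ⊤ := fun k hk =>
      hDt k ((ENNReal.rpow_eq_top_iff_of_pos ht0).mpr hk)
    apply ENNReal.div_le_of_le_mul
    set g : ℕ → Set (EuclideanSpace ℝ (Fin d)) := fun k => U ∩ closure (f k) with hg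
    set A : ℕ → Set (EuclideanSpace ℝ (Fin d)) := disjointed g with hA
    have hgm : ∀ k, MeasurableSet (g k) := fun k =>
      hU.inter isClosed_closure.measurableSet
    have hAm : ∀ k, MeasurableSet (A k) := MeasurableSet.disjointed hgm
    have hAdisj : Pairwise (Function.onFun Disjoint A) := disjoint_disjointed g
    have hAsub : ∀ k, A k ⊆ g k := disjointed_subset g
    have hAU : ⋃ k, A k = U := by
      rw [hA, iUnion_disjointed, hg, ← inter_iUnion]
      exact inter_eq_left.mpr (hf.trans (iUnion_mono fun k => subset_closure))
    have hvol : volume U = ∑' k, volume (A k) := by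
      rw [← hAU]; exact measure_iUnion hAdisj hAm
    set a : ℕ → ℝ≥0∞ := fun k => EMetric.diam (f k) ^ t with ha
    set b : ℕ → ℝ≥0∞ := fun k =>
      ∫⁻ x in A k, ∫⁻ y in A k, edist x y ^ (-t) ∂volume ∂volume with hb
    have key : ∀ k, volume (A k) ^ 2 ≤ a k * b k := by
      intro k
      rcases eq_or_ne (EMetric.diam (f k)) 0 with hD0 | hD0
      · have hsub : A k ⊆ closure (f k) := (hAsub k).trans inter_subset_right
        have h2 : EMetric.diam (closure (f k)) = 0 := by
          exact (EMetric.diam_closure (s := f k)).trans hD0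
        have hss : (A k).Subsingleton := (EMetric.diam_eq_zero_iff.mp h2).anti hsub
        haveI : Nonempty (Fin d) := ⟨⟨0, hd⟩⟩
        rw [hss.measure_zero]
        simp
      · set D := EMetric.diam (f k) with hDdef
        have hpt : ∀ x ∈ A k, ∀ y ∈ A k, D ^ (-t) ≤ edist x y ^ (-t) := by
          intro x hx y hy
          have hxc : x ∈ closure (f k) := ((hAsub k) hx).2
          have hyc : y ∈ closure (f k) := ((hAsub k) hy).2
          have hxy : edist x y ≤ D := by
            have := EMetric.edist_le_diam_of_mem hxc hyc
            exact this.trans_eq (EMetric.diam_closure (s := f k))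
          rw [ENNReal.rpow_neg, ENNReal.rpow_neg]
          exact ENNReal.inv_le_inv.mpr (ENNReal.rpow_le_rpow hxy ht0.le)
        have hinner : ∀ x ∈ A k,
            D ^ (-t) * volume (A k) ≤ ∫⁻ y in A k, edist x y ^ (-t) ∂volume := by
          intro x hx
          rw [← setLIntegral_const]
          exact setLIntegral_mono' (hAm k) (fun y hy => hpt x hx y hy)
        have houter : D ^ (-t) * volume (A k) * volume (A k) ≤ b k := by
          calc D ^ (-t) * volume (A k) * volume (A k)
              = ∫⁻ _ in A k, D ^ (-t) * volume (A k) ∂volume := by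
                rw [setLIntegral_const]
            _ ≤ b k := setLIntegral_mono' (hAm k) hinner
        have hcancel : D ^ t * D ^ (-t) = 1 := by
          rw [ENNReal.rpow_neg]
          exact ENNReal.mul_inv_cancel
            (ne_of_gt (ENNReal.rpow_pos (pos_iff_ne_zero.mpr hD0) (hD k)))
            (ENNReal.rpow_ne_top_of_nonneg ht0.le (hD k))
        have heq : volume (A k) ^ 2 = D ^ t * (D ^ (-t) * volume (A k) * volume (A k)) := by
          rw [pow_two, ← mul_assoc, ← mul_assoc, hcancel, one_mul]
        rw [heq]
        exact mul_le_mul_right houter _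
    have hbI : ∑' k, b k ≤ rieszEnergyR d t U := by
      have h1 : ∀ k, b k ≤
          ∫⁻ x in A k, (∫⁻ y in U, edist x y ^ (-t) ∂volume) ∂volume := by
        intro k
        refine lintegral_mono fun x => ?_
        exact lintegral_mono'
          (Measure.restrict_mono ((hAsub k).trans inter_subset_left) le_rfl) le_rfl
      calc ∑' k, b k
          ≤ ∑' k, ∫⁻ x in A k, (∫⁻ y in U, edist x y ^ (-t) ∂volume) ∂volume :=
            ENNReal.tsum_le_tsum h1
        _ = ∫⁻ x in ⋃ k, A k, (∫⁻ y in U, edist x y ^ (-t) ∂volume) ∂volume :=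
            (lintegral_iUnion hAm hAdisj _).symm
        _ = rieszEnergyR d t U := by rw [hAU]; rfl
    have hc : ∀ k, volume (A k) ≤ a k ^ (1/2 : ℝ) * b k ^ (1/2 : ℝ) := by
      intro k
      have h2 : (volume (A k) ^ 2) ^ (1/2 : ℝ) ≤ (a k * b k) ^ (1/2 : ℝ) :=
        ENNReal.rpow_le_rpow (key k) (by norm_num)
      rwa [← ENNReal.rpow_natCast (volume (A k)) 2, ← ENNReal.rpow_mul,
        (by norm_num : ((2 : ℕ) : ℝ) * (1/2 : ℝ) = 1), ENNReal.rpow_one,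
        ENNReal.mul_rpow_of_nonneg _ _ (by norm_num : (0:ℝ) ≤ 1/2)] at h2
    have hFG : ∑' k, a k ^ (1/2 : ℝ) * b k ^ (1/2 : ℝ) ≤
        (∑' k, a k) ^ (1/2 : ℝ) * (∑' k, b k) ^ (1/2 : ℝ) := by
      have hpq : Real.HolderConjugate 2 2 := Real.HolderConjugate.two_two
      have h := ENNReal.lintegral_mul_le_Lp_mul_Lq (Measure.count : Measure ℕ) hpq
        (f := fun k => a k ^ (1/2 : ℝ)) (g := fun k => b k ^ (1/2 : ℝ))
        (measurable_of_countable _).aemeasurable (measurable_of_countable _).aemeasurable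
      simp only [Pi.mul_apply, lintegral_count, ← ENNReal.rpow_mul] at h
      norm_num at h
      convert h using 2 <;> norm_num
    have hsum : volume U ≤ (∑' k, a k) ^ (1/2 : ℝ) * (∑' k, b k) ^ (1/2 : ℝ) := by
      rw [hvol]
      exact le_trans (ENNReal.tsum_le_tsum hc) hFG
    have hsq : volume U ^ 2 ≤ (∑' k, a k) * (∑' k, b k) := by
      calc volume U ^ 2
          ≤ ((∑' k, a k) ^ (1/2 : ℝ) * (∑' k, b k) ^ (1/2 : ℝ)) ^ 2 :=
            pow_le_pow_left' hsum 2
        _ = (∑' k, a k) * (∑' k, b k) := by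
            rw [mul_pow, ← ENNReal.rpow_natCast ((∑' k, a k) ^ (1/2 : ℝ)) 2,
              ← ENNReal.rpow_natCast ((∑' k, b k) ^ (1/2 : ℝ)) 2,
              ← ENNReal.rpow_mul, ← ENNReal.rpow_mul]
            norm_num
    exact hsq.trans (mul_le_mul_right hbI _)
  refine ⟨?_, main⟩
  unfold hausdorffContent
  exact le_iInf fun f => le_iInf fun hf => main f hf
end
end

section
/- Let U ⊂ ℝ^d be a Borel set with 0 < λ(U) < ∞, let 0 < t < d, and assume I_t(U) < ∞. Define the measure η by η(A) = ∫_{A∩U} ( ∫_U |x−y|^{−t} dy )^{−1} dx. Then η(A) ≤ |A|^t for every Borel set A, and η(U) ≥ λ(U)^2 / I_t(U). -/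
/-!
Write `F x = ∫_U |x-y|^{-t} dy` for the potential of `U`, so that `η` has density `1/F` on `U`.
For `x ∈ A` every `y ∈ A ∩ U` has `|x-y|^{-t} ≥ |A|^{-t}`, hence `F x ≥ |A|^{-t} λ(A ∩ U)` and
integrating `1/F` over `A ∩ U` gives at most `|A|^t`. The lower bound is Cauchy–Schwarz:
`λ(U) = ∫_U F^{-1/2} F^{1/2} ≤ η(U)^{1/2} I_t(U)^{1/2}`.
-/

open MeasureTheory Filter Set
open scoped ENNReal Topology

noncomputable section

theorem ENNReal.inv_mul_mul_le_inv (c m : ℝ≥0∞) : (c * m)⁻¹ * m ≤ c⁻¹ := by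
  rcases eq_or_ne m 0 with rfl | hm0
  · simp
  rcases eq_or_ne m ⊤ with rfl | hmtop
  · rcases eq_or_ne c 0 with rfl | hc <;> simp [*]
  rw [ENNReal.mul_inv (Or.inr hmtop) (Or.inr hm0), mul_assoc, ENNReal.inv_mul_cancel hm0 hmtop,
    mul_one]

theorem measure_univ_sq_le_lintegral_inv_mul_lintegral {α : Type*} [MeasurableSpace α]
    (ν : Measure α) {F : α → ℝ≥0∞} (hF : AEMeasurable F ν) (hF0 : ∀ᵐ x ∂ν, F x ≠ 0)
    (hFtop : ∀ᵐ x ∂ν, F x ≠ ⊤) :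
    ν univ ^ 2 ≤ (∫⁻ x, (F x)⁻¹ ∂ν) * ∫⁻ x, F x ∂ν := by
  have hHolder := ENNReal.lintegral_mul_le_Lp_mul_Lq ν .two_two
    (hF.pow_const (-(1 / 2) : ℝ)) (hF.pow_const (1 / 2 : ℝ))
  have hone :
      ∫⁻ x, ((fun x ↦ F x ^ (-(1 / 2) : ℝ)) * fun x ↦ F x ^ (1 / 2 : ℝ)) x ∂ν = ν univ := by
    rw [← lintegral_one]
    refine lintegral_congr_ae ?_
    filter_upwards [hF0, hFtop] with x hx0 hxtop
    rw [Pi.mul_apply, ← ENNReal.rpow_add _ _ hx0 hxtop]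
    norm_num
  have hsq_inv (x) : (F x ^ (-(1 / 2) : ℝ)) ^ (2 : ℝ) = (F x)⁻¹ := by
    rw [← ENNReal.rpow_mul]; norm_num [ENNReal.rpow_neg_one]
  have hsq (x) : (F x ^ (1 / 2 : ℝ)) ^ (2 : ℝ) = F x := by
    rw [← ENNReal.rpow_mul]; norm_num
  simp only [hone, hsq_inv, hsq] at hHolder
  calc ν univ ^ 2 ≤ ((∫⁻ x, (F x)⁻¹ ∂ν) ^ (1 / 2 : ℝ) * (∫⁻ x, F x ∂ν) ^ (1 / 2 : ℝ)) ^ 2 :=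
        pow_le_pow_left' hHolder 2
    _ = (∫⁻ x, (F x)⁻¹ ∂ν) * ∫⁻ x, F x ∂ν := by
        rw [mul_pow, ← ENNReal.rpow_mul_natCast, ← ENNReal.rpow_mul_natCast]
        norm_num

section RieszPotential

variable {X : Type*} [PseudoMetricSpace X] {t : ℝ}

theorem rpow_neg_edist_pos (ht : 0 ≤ t) (x y : X) : 0 < edist x y ^ (-t) := by
  rcases eq_or_ne (edist x y) 0 with h | h
  · rcases ht.eq_or_lt with rfl | ht
    · simp
    · simp [h, ENNReal.zero_rpow_of_neg (neg_neg_of_pos ht)]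
  · exact ENNReal.rpow_pos (pos_iff_ne_zero.mpr h) (edist_ne_top x y)

def rieszPotential [MeasurableSpace X] (μ : Measure X) (t : ℝ) (U : Set X) (x : X) : ℝ≥0∞ :=
  ∫⁻ y in U, edist x y ^ (-t) ∂μ

variable [MeasurableSpace X] [OpensMeasurableSpace X] {μ : Measure X} {U A : Set X}

theorem measurable_rieszPotential [SecondCountableTopology X] [SFinite μ] :
    Measurable (rieszPotential μ t U) :=
  (measurable_edist.pow_const _).lintegral_prod_right'

theorem rieszPotential_ne_zero (ht : 0 ≤ t) (hU : μ U ≠ 0) (x : X) :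
    rieszPotential μ t U x ≠ 0 := by
  refine ((setLIntegral_pos_iff (measurable_edist_right.pow_const _)).mpr ?_).ne'
  simpa [Function.support, (rpow_neg_edist_pos ht x _).ne'] using pos_iff_ne_zero.mpr hU

theorem diam_rpow_neg_mul_measure_le_rieszPotential (ht : 0 ≤ t) {x : X} (hx : x ∈ A) :
    Metric.ediam A ^ (-t) * μ (A ∩ U) ≤ rieszPotential μ t U x :=
  calc Metric.ediam A ^ (-t) * μ (A ∩ U)
      = ∫⁻ _ in A ∩ U, Metric.ediam A ^ (-t) ∂μ := (setLIntegral_const _ _).symm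
    _ ≤ ∫⁻ y in A ∩ U, edist x y ^ (-t) ∂μ :=
        setLIntegral_mono (measurable_edist_right.pow_const _) fun _ hy ↦ by
          simp only [ENNReal.rpow_neg]
          gcongr
          exact Metric.edist_le_ediam_of_mem hx hy.1
    _ ≤ rieszPotential μ t U x := lintegral_mono_set inter_subset_right

theorem setLIntegral_inv_rieszPotential_le_diam_rpow (ht : 0 ≤ t) (A U : Set X) :
    ∫⁻ x in A ∩ U, (rieszPotential μ t U x)⁻¹ ∂μ ≤ Metric.ediam A ^ t :=
  calc ∫⁻ x in A ∩ U, (rieszPotential μ t U x)⁻¹ ∂μ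
      ≤ ∫⁻ _ in A ∩ U, (Metric.ediam A ^ (-t) * μ (A ∩ U))⁻¹ ∂μ :=
        setLIntegral_mono measurable_const fun _ hx ↦
          ENNReal.inv_le_inv.mpr (diam_rpow_neg_mul_measure_le_rieszPotential ht hx.1)
    _ = (Metric.ediam A ^ (-t) * μ (A ∩ U))⁻¹ * μ (A ∩ U) := setLIntegral_const _ _
    _ ≤ Metric.ediam A ^ t :=
        (ENNReal.inv_mul_mul_le_inv _ _).trans_eq (by rw [ENNReal.rpow_neg, inv_inv])

theorem measure_sq_le_lintegral_inv_rieszPotential_mul_lintegral [SecondCountableTopology X]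
    [SFinite μ] (ht : 0 ≤ t) (hU : μ U ≠ 0) (hI : ∫⁻ x in U, rieszPotential μ t U x ∂μ ≠ ⊤) :
    μ U ^ 2 ≤
      (∫⁻ x in U, (rieszPotential μ t U x)⁻¹ ∂μ) * ∫⁻ x in U, rieszPotential μ t U x ∂μ := by
  simpa using measure_univ_sq_le_lintegral_inv_mul_lintegral (μ.restrict U)
    measurable_rieszPotential.aemeasurable (ae_of_all _ (rieszPotential_ne_zero ht hU))
    (ae_lt_top measurable_rieszPotential hI |>.mono fun _ ↦ LT.lt.ne)

end RieszPotential

theorem rieszEnergyR_eq_setLIntegral_rieszPotential (d : ℕ) (t : ℝ)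
    (U : Set (EuclideanSpace ℝ (Fin d))) :
    rieszEnergyR d t U = ∫⁻ x in U, rieszPotential volume t U x :=
  rfl

theorem potential_measure_bounds_general
    (d : ℕ)
    (U : Set (EuclideanSpace ℝ (Fin d)))
    (hU0 : 0 < volume U)
    (t : ℝ) (ht0 : 0 < t)
    (hI : rieszEnergyR d t U < ⊤)
    (η : Set (EuclideanSpace ℝ (Fin d)) → ℝ≥0∞)
    (hη : ∀ A, η A = ∫⁻ x in A ∩ U, (∫⁻ y in U, edist x y ^ (-t) ∂volume)⁻¹ ∂volume) :
    (∀ A : Set (EuclideanSpace ℝ (Fin d)), MeasurableSet A →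
        η A ≤ EMetric.diam A ^ t) ∧
      volume U ^ 2 / rieszEnergyR d t U ≤ η U := by
  have hηA (A) : η A = ∫⁻ x in A ∩ U, (rieszPotential volume t U x)⁻¹ := hη A
  refine ⟨fun A _ ↦ hηA A ▸ setLIntegral_inv_rieszPotential_le_diam_rpow ht0.le A U, ?_⟩
  refine ENNReal.div_le_of_le_mul ?_
  rw [rieszEnergyR_eq_setLIntegral_rieszPotential] at hI ⊢
  rw [hηA, inter_self]
  exact measure_sq_le_lintegral_inv_rieszPotential_mul_lintegral ht0.le hU0.ne' hI.ne

/-- **Properties of the normalised potential measure.** For a Borel set `U ⊆ ℝ^d` of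
positive finite measure and `0 < t < d` with `I_t(U) < ∞`, the measure
`η(A) = ∫_{A ∩ U} (∫_U |x-y|^{-t} dy)⁻¹ dx`
satisfies `η(A) ≤ |A|^t` for every Borel set `A`, and `η(U) ≥ λ(U)² / I_t(U)`. -/
theorem potential_measure_bounds
    (d : ℕ) (hd : 0 < d)
    (U : Set (EuclideanSpace ℝ (Fin d))) (hU : MeasurableSet U)
    (hU0 : 0 < volume U) (hUfin : volume U < ⊤)
    (t : ℝ) (ht0 : 0 < t) (htd : t < d)
    (hI : rieszEnergyR d t U < ⊤)
    (η : Set (EuclideanSpace ℝ (Fin d)) → ℝ≥0∞)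
    (hη : ∀ A, η A = ∫⁻ x in A ∩ U, (∫⁻ y in U, edist x y ^ (-t) ∂volume)⁻¹ ∂volume) :
    (∀ A : Set (EuclideanSpace ℝ (Fin d)), MeasurableSet A →
        η A ≤ EMetric.diam A ^ t) ∧
      volume U ^ 2 / rieszEnergyR d t U ≤ η U :=
  potential_measure_bounds_general d U hU0 t ht0 hI η hη
end
end

section
/- Let μ be a finite Borel measure on 𝕋^d, let D ⊂ 𝕋^d be a Borel set with μ(D) > 0, let 0 < t < d, and define the measure ν by ν(A) = ∫_{A∩D} ( ∫_D |x−y|^{−t} dμ(x) )^{−1} dμ(y). Then for every Borel set U ⊂ D one has ν(U) ≤ |U|^t, and moreover ν(D) ≥ μ(D)^2 · ( ∬_{D×D} |x−y|^{−t} dμ(x) dμ(y) )^{−1}. -/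
open MeasureTheory Metric Filter Set
open scoped ENNReal Topology

noncomputable section

/-- **Properties of the normalised potential measure associated to `μ` on `D`.**
For a finite Borel measure `μ` on `𝕋^d`, a Borel set `D` with `μ(D) > 0` and `0 < t < d`,
the measure `ν(A) = ∫_{A ∩ D} (∫_D |x-y|^{-t} dμ(x))⁻¹ dμ(y)` satisfies `ν(U) ≤ |U|^t`
for every Borel `U ⊆ D`, and `ν(D) ≥ μ(D)² · (∬_{D×D} |x-y|^{-t} dμ dμ)⁻¹`. -/
theorem potential_measure_bounds_torus
    (d : ℕ) (hd : 0 < d)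
    (μ : Measure (Torus d)) (hfin : IsFiniteMeasure μ)
    (D : Set (Torus d)) (hD : MeasurableSet D) (hμD : 0 < μ D)
    (t : ℝ) (ht0 : 0 < t) (htd : t < d)
    (ν : Set (Torus d) → ℝ≥0∞)
    (hν : ∀ A, ν A = ∫⁻ y in A ∩ D, (∫⁻ x in D, edist x y ^ (-t) ∂μ)⁻¹ ∂μ) :
    (∀ U : Set (Torus d), MeasurableSet U → U ⊆ D → ν U ≤ EMetric.diam U ^ t) ∧
      μ D ^ 2 * (∫⁻ y in D, ∫⁻ x in D, edist x y ^ (-t) ∂μ ∂μ)⁻¹ ≤ ν D := by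
  have hrpow_anti : ∀ {a b : ℝ≥0∞}, a ≤ b → b ^ (-t) ≤ a ^ (-t) := by
    intro a b hab
    rw [ENNReal.rpow_neg, ENNReal.rpow_neg]
    exact ENNReal.inv_le_inv.2 (ENNReal.rpow_le_rpow hab ht0.le)
  have hedist_le_one : ∀ x y : Torus d, edist x y ≤ 1 := by
    intro x y
    rw [edist_pi_def]
    refine Finset.sup_le fun i _ => ?_
    rw [edist_dist]
    refine ENNReal.ofReal_le_one.2 ?_
    have h2 : ‖x i - y i‖ ≤ |(1:ℝ)| / 2 := AddCircle.norm_le_half_period 1 one_ne_zero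
    rw [dist_eq_norm]
    calc ‖x i - y i‖ ≤ |(1:ℝ)| / 2 := h2
      _ ≤ 1 := by norm_num
  -- the potential function
  set h : Torus d → ℝ≥0∞ := fun y => ∫⁻ x in D, edist x y ^ (-t) ∂μ with hh
  have hpos : ∀ y, μ D ≤ h y := by
    intro y
    calc μ D = ∫⁻ _ in D, 1 ∂μ := (setLIntegral_one D).symm
      _ ≤ h y := setLIntegral_mono' hD fun x _ => by
          simpa using hrpow_anti (hedist_le_one x y)
  constructor
  · intro U hU hUD
    rw [hν, inter_eq_self_of_subset_left hUD]
    rcases eq_or_ne (μ U) 0 with hμU | hμU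
    · rw [setLIntegral_measure_zero _ _ hμU]; exact zero_le
    have key : ∀ y ∈ U,
        (∫⁻ x in D, edist x y ^ (-t) ∂μ)⁻¹ ≤ EMetric.diam U ^ t * (μ U)⁻¹ := by
      intro y hy
      have h1 : EMetric.diam U ^ (-t) * μ U ≤ ∫⁻ x in D, edist x y ^ (-t) ∂μ := by
        calc EMetric.diam U ^ (-t) * μ U = ∫⁻ _ in U, EMetric.diam U ^ (-t) ∂μ := by
              rw [setLIntegral_const]
          _ ≤ ∫⁻ x in U, edist x y ^ (-t) ∂μ := setLIntegral_mono' hU fun x hx =>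
              hrpow_anti (EMetric.edist_le_diam_of_mem hx hy)
          _ ≤ ∫⁻ x in D, edist x y ^ (-t) ∂μ := lintegral_mono_set hUD
      calc (∫⁻ x in D, edist x y ^ (-t) ∂μ)⁻¹
          ≤ (EMetric.diam U ^ (-t) * μ U)⁻¹ := ENNReal.inv_le_inv.2 h1
        _ = EMetric.diam U ^ t * (μ U)⁻¹ := by
            rw [ENNReal.mul_inv (Or.inr (measure_ne_top μ U)) (Or.inr hμU),
              ENNReal.rpow_neg, inv_inv]
    calc ∫⁻ y in U, (∫⁻ x in D, edist x y ^ (-t) ∂μ)⁻¹ ∂μ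
        ≤ ∫⁻ _ in U, EMetric.diam U ^ t * (μ U)⁻¹ ∂μ := setLIntegral_mono' hU key
      _ = EMetric.diam U ^ t * (μ U)⁻¹ * μ U := setLIntegral_const _ _
      _ = EMetric.diam U ^ t := by
          rw [mul_assoc, ENNReal.inv_mul_cancel hμU (measure_ne_top μ U), mul_one]
  · rw [hν, inter_self]
    set I : ℝ≥0∞ := ∫⁻ y in D, h y ∂μ with hI
    set J : ℝ≥0∞ := ∫⁻ y in D, (h y)⁻¹ ∂μ with hJ
    rcases eq_or_ne I ⊤ with hItop | hItop
    · rw [hItop, ENNReal.inv_top, mul_zero]; exact zero_le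
    have hmeas : Measurable h := by
      have h1 : Measurable (Function.uncurry fun (y x : Torus d) => edist x y ^ (-t)) := by
        exact ENNReal.continuous_rpow_const.measurable.comp
          (measurable_edist.comp measurable_swap)
      exact h1.lintegral_prod_right
    have hae : ∀ᵐ y ∂μ.restrict D, h y < ⊤ := ae_lt_top hmeas hItop
    have hCS : μ D ≤ I ^ (1 / 2 : ℝ) * J ^ (1 / 2 : ℝ) := by
      have hH := ENNReal.lintegral_mul_norm_pow_le (μ := μ.restrict D)
        hmeas.aemeasurable hmeas.inv.aemeasurable
        (by norm_num : (0:ℝ) ≤ 1 / 2) (by norm_num : (0:ℝ) ≤ 1 / 2) (by norm_num)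
      refine le_trans ?_ hH
      have hone : ∀ᵐ y ∂μ.restrict D,
          (1 : ℝ≥0∞) ≤ h y ^ (1 / 2 : ℝ) * (h y)⁻¹ ^ (1 / 2 : ℝ) := by
        filter_upwards [hae] with y hy
        have h0 : h y ≠ 0 := (lt_of_lt_of_le hμD (hpos y)).ne'
        rw [← ENNReal.mul_rpow_of_ne_top hy.ne (ENNReal.inv_ne_top.2 h0),
          ENNReal.mul_inv_cancel h0 hy.ne, ENNReal.one_rpow]
      calc μ D = ∫⁻ _ in D, 1 ∂μ := (setLIntegral_one D).symm
        _ ≤ _ := lintegral_mono_ae hone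
    have hhalf : ∀ x : ℝ≥0∞, x ^ (1 / 2 : ℝ) * x ^ (1 / 2 : ℝ) = x := by
      intro x
      rw [← ENNReal.rpow_add_of_nonneg _ _ (by norm_num) (by norm_num)]
      norm_num
    have hsq : μ D * μ D ≤ I * J := by
      calc μ D * μ D
          ≤ (I ^ (1/2:ℝ) * J ^ (1/2:ℝ)) * (I ^ (1/2:ℝ) * J ^ (1/2:ℝ)) := mul_le_mul' hCS hCS
        _ = (I ^ (1/2:ℝ) * I ^ (1/2:ℝ)) * (J ^ (1/2:ℝ) * J ^ (1/2:ℝ)) := by ring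
        _ = I * J := by rw [hhalf, hhalf]
    have hI_lb : μ D * μ D ≤ I := by
      calc μ D * μ D = ∫⁻ _ in D, μ D ∂μ := by rw [setLIntegral_const]
        _ ≤ I := setLIntegral_mono' hD fun y _ => hpos y
    have hI0 : I ≠ 0 :=
      (lt_of_lt_of_le (ENNReal.mul_pos hμD.ne' hμD.ne') hI_lb).ne'
    calc μ D ^ 2 * I⁻¹ = μ D * μ D * I⁻¹ := by rw [sq]
      _ ≤ I * J * I⁻¹ := mul_le_mul_left hsq _
      _ = J * (I * I⁻¹) := by ring
      _ = J := by rw [ENNReal.mul_inv_cancel hI0 hItop, mul_one]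
end
end

section
/- Let 0 < t < s < d, let E_n be open sets in 𝕋^d, and let μ_n be finite Borel measures with μ_n(𝕋^d \ E_n) = 0, each absolutely continuous with respect to λ, and let C be a constant such that for every ball B, C^{−1} ≤ liminf_{n→∞} μ_n(B)/λ(B) ≤ limsup_{n→∞} μ_n(B)/λ(B) ≤ C, and ∬ |x−y|^{−s} dμ_n(x) dμ_n(y) < C for all n. Then there is a constant C_0 > 0, depending only on d, t and C, such that for every dyadic cube D, liminf_{n→∞} ℳ_∞^t(E_n ∩ D) ≥ C_0 |D|^t. -/
open MeasureTheory Metric Filter Set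
open scoped ENNReal Topology

noncomputable section

/-!
Let `D` be a dyadic cube of diameter `r` and `(D_j)` a cover of `E_n ∩ D` by dyadic cubes of
diameters `ℓ_j`; we may assume `ℓ_j ≤ r`, since otherwise `∑ ℓ_j^t ≥ r^t`. A ball of radius
comparable to `r` sits inside `D`, so for large `n` the lower density bound gives
`μ_n(D) ≳ r^d`, and all this mass lies on `E_n ∩ D ⊆ ⋃ D_j`. Put `δ = r^((2d - t)/(s - t))`.
The dyadic cubes of diameter at least `δ` are finitely many, so for large `n` the upper density
bound gives `μ_n(D_j) ≲ ℓ_j^d ≤ r^(d-t) ℓ_j^t` for all of them at once. A piece `A` of a cube of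
diameter `ℓ < δ` has `μ_n(A)² ≤ ℓ^s · (s-energy of μ_n on A)`, so by Cauchy–Schwarz the small
cubes carry mass at most `(∑ ℓ_j^t)^(1/2) (δ^(s-t) C)^(1/2) = r^(d-t/2) (C ∑ ℓ_j^t)^(1/2)`.
Whichever of the two families carries half of `μ_n(D)`, we get `∑ ℓ_j^t ≳ r^t`.
-/

namespace AddCircle

variable {p : ℝ}

theorem dist_coe_coe_le (x y : ℝ) : dist (x : AddCircle p) (y : AddCircle p) ≤ |x - y| := by
  rw [dist_eq_norm, ← QuotientAddGroup.mk_sub]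
  exact QuotientAddGroup.norm_mk_le_norm

theorem exists_coe_eq_and_abs_sub_eq_dist (z : AddCircle p) (c : ℝ) :
    ∃ y : ℝ, (y : AddCircle p) = z ∧ |y - c| = dist z (c : AddCircle p) := by
  obtain ⟨y, rfl⟩ := QuotientAddGroup.mk_surjective z
  refine ⟨y - round (p⁻¹ * (y - c)) * p, ?_, ?_⟩
  · rw [QuotientAddGroup.mk_sub, ← zsmul_eq_mul, QuotientAddGroup.mk_zsmul]
    simp [coe_period]
  · rw [dist_eq_norm, ← QuotientAddGroup.mk_sub, AddCircle.norm_eq]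
    ring_nf

theorem ball_coe_subset_image_Ioo (c ρ : ℝ) :
    ball (c : AddCircle p) ρ ⊆ ((↑) : ℝ → AddCircle p) '' Ioo (c - ρ) (c + ρ) := by
  intro z hz
  obtain ⟨y, rfl, hy⟩ := exists_coe_eq_and_abs_sub_eq_dist z c
  refine ⟨y, ?_, rfl⟩
  have := hy ▸ mem_ball.mp hz
  constructor <;> linarith [abs_lt.mp this]

theorem measurableSet_image_coe_Ico (a b : ℝ) :
    MeasurableSet (((↑) : ℝ → AddCircle p) '' Ico a b) := by
  rcases le_or_gt b a with h | h
  · simp [Ico_eq_empty_of_le h]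
  · rw [← Ioo_insert_left h, image_insert_eq]
    exact (QuotientAddGroup.isOpenMap_coe _ isOpen_Ioo).measurableSet.insert _

end AddCircle

def dyadicArc (n : ℕ) (k : ℤ) : Set (AddCircle (1 : ℝ)) :=
  ((↑) : ℝ → AddCircle (1 : ℝ)) '' Ico (k / 2 ^ n) ((k + 1) / 2 ^ n)

def dyadicCube (d n : ℕ) (k : Fin d → ℤ) : Set (Torus d) :=
  univ.pi fun i => dyadicArc n (k i)

section DyadicCube

variable {d : ℕ}

theorem isDyadicCube_iff {D : Set (Torus d)} :
    IsDyadicCube D ↔ ∃ n k, D = dyadicCube d n k := by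
  have image_pi (s : Fin d → Set ℝ) : torusProj '' univ.pi s =
      univ.pi fun i => ((↑) : ℝ → AddCircle (1 : ℝ)) '' s i := by
    ext x
    refine ⟨?_, fun hx => ?_⟩
    · rintro ⟨y, hy, rfl⟩
      exact fun i _ => ⟨y i, hy i trivial, rfl⟩
    · choose y hys hyx using fun i => hx i trivial
      exact ⟨y, fun i _ => hys i, funext hyx⟩
  simp only [IsDyadicCube, image_pi, dyadicCube, dyadicArc]

theorem dyadicArc_add_mul (n : ℕ) (k q : ℤ) : dyadicArc n (k + 2 ^ n * q) = dyadicArc n k := by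
  have hq : ((↑) : ℝ → AddCircle (1 : ℝ)) ∘ (· + (q : ℝ)) = (↑) := by
    funext x
    simp
  have hIco : Ico (((k + 2 ^ n * q : ℤ) : ℝ) / 2 ^ n) (((k + 2 ^ n * q : ℤ) + 1) / 2 ^ n) =
      (· + (q : ℝ)) '' Ico (k / 2 ^ n) ((k + 1) / 2 ^ n) := by
    rw [image_add_const_Ico]
    congr 1
    · push_cast; field_simp
    · push_cast; field_simp; ring
  rw [dyadicArc, hIco, ← image_comp, hq, dyadicArc]

theorem dyadicArc_emod (n : ℕ) (k : ℤ) : dyadicArc n (k % 2 ^ n) = dyadicArc n k := by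
  conv_rhs => rw [← Int.emod_add_mul_ediv k (2 ^ n), dyadicArc_add_mul]

theorem measurableSet_dyadicCube (n : ℕ) (k : Fin d → ℤ) : MeasurableSet (dyadicCube d n k) :=
  .univ_pi fun _ => AddCircle.measurableSet_image_coe_Ico _ _

theorem ediam_dyadicCube_le (n : ℕ) (k : Fin d → ℤ) : ediam (dyadicCube d n k) ≤ 2⁻¹ ^ n := by
  refine ediam_pi_le_of_le fun i => ediam_image_le_iff.2 fun x hx y hy => ?_
  have hxy : |x - y| ≤ (2 ^ n)⁻¹ := by
    rw [abs_sub_le_iff]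
    constructor <;> linarith [hx.1, hx.2, hy.1, hy.2, show ((k i : ℝ) + 1) / 2 ^ n =
      k i / 2 ^ n + (2 ^ n)⁻¹ by field_simp]
  calc edist _ _ ≤ ENNReal.ofReal ((2 ^ n)⁻¹) :=
        (edist_le_ofReal (by positivity)).2 ((AddCircle.dist_coe_coe_le x y).trans hxy)
    _ = 2⁻¹ ^ n := by
        rw [ENNReal.ofReal_inv_of_pos (by positivity), ENNReal.ofReal_pow zero_le_two,
          ENNReal.ofReal_ofNat, ENNReal.inv_pow]

def dyadicCenter (n : ℕ) (k : Fin d → ℤ) : Torus d := torusProj fun i => (k i + 2⁻¹) / 2 ^ n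

theorem ball_dyadicCenter_subset (n : ℕ) (k : Fin d → ℤ) :
    ball (dyadicCenter n k) (2⁻¹ / 2 ^ n) ⊆ dyadicCube d n k := by
  rw [ball_pi _ (by positivity)]
  refine pi_mono fun i _ => (AddCircle.ball_coe_subset_image_Ioo _ _).trans
    (image_mono (Ioo_subset_Ico_self.trans (Ico_subset_Ico (le_of_eq ?_) (le_of_eq ?_)))) <;>
  field_simp <;> ring

theorem dyadicCube_nontrivial (hd : 0 < d) (n : ℕ) (k : Fin d → ℤ) :
    (dyadicCube d n k).Nontrivial := by
  set corner : Torus d := torusProj fun i => k i / 2 ^ n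
  have hcorner : corner ∈ dyadicCube d n k := fun i _ =>
    ⟨k i / 2 ^ n, ⟨le_rfl, by gcongr; linarith⟩, rfl⟩
  refine ⟨corner, hcorner, dyadicCenter n k,
    ball_dyadicCenter_subset n k (mem_ball_self (by positivity)), fun h => ?_⟩
  have h0 : ((k ⟨0, hd⟩ / 2 ^ n : ℝ) : AddCircle (1 : ℝ)) = ((k ⟨0, hd⟩ + 2⁻¹) / 2 ^ n : ℝ) :=
    congr_fun h ⟨0, hd⟩
  have hle : (k ⟨0, hd⟩ + 2⁻¹ : ℝ) / 2 ^ n ≤ k ⟨0, hd⟩ / 2 ^ n + 2⁻¹ := by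
    rw [add_div, add_le_add_iff_left]
    exact div_le_self (by norm_num) (one_le_pow₀ one_le_two)
  rw [AddCircle.coe_eq_coe_iff_of_mem_Ico (a := (k ⟨0, hd⟩ : ℝ) / 2 ^ n) ⟨le_rfl, by linarith⟩
    ⟨by gcongr; linarith, by linarith⟩] at h0
  field_simp at h0
  linarith

theorem finite_range_dyadicCube (n : ℕ) : (range (dyadicCube d n)).Finite := by
  refine ((Finite.pi fun _ => finite_Ico (0 : ℤ) (2 ^ n)).image (dyadicCube d n)).subset ?_
  rintro _ ⟨k, rfl⟩
  refine ⟨fun i => k i % 2 ^ n, fun i _ => ⟨Int.emod_nonneg _ (by positivity),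
    Int.emod_lt_of_pos _ (by positivity)⟩, ?_⟩
  simp only [dyadicCube, dyadicArc_emod]

theorem finite_setOf_isDyadicCube_le_ediam {δ : ℝ≥0∞} (hδ : δ ≠ 0) :
    {Q : Set (Torus d) | IsDyadicCube Q ∧ δ ≤ ediam Q}.Finite := by
  obtain ⟨N, hN⟩ := ENNReal.exists_inv_two_pow_lt hδ
  refine ((finite_Iic N).biUnion fun n _ => finite_range_dyadicCube (d := d) n).subset ?_
  rintro Q ⟨hQ, hδQ⟩
  obtain ⟨n, k, rfl⟩ := isDyadicCube_iff.1 hQ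
  refine mem_biUnion (x := n) (mem_Iic.2 ?_) ⟨k, rfl⟩
  by_contra! hn
  exact hN.not_ge (hδQ.trans ((ediam_dyadicCube_le n k).trans
    (pow_le_pow_right_of_le_one' (ENNReal.inv_le_one.2 one_le_two) hn.le)))

theorem IsDyadicCube.ediam_ne_zero (hd : 0 < d) {Q : Set (Torus d)} (hQ : IsDyadicCube Q) :
    ediam Q ≠ 0 := by
  obtain ⟨n, k, rfl⟩ := isDyadicCube_iff.1 hQ
  exact (ediam_pos_iff.2 (dyadicCube_nontrivial hd n k)).ne'

theorem IsDyadicCube.measurableSet {Q : Set (Torus d)} (hQ : IsDyadicCube Q) : MeasurableSet Q := by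
  obtain ⟨n, k, rfl⟩ := isDyadicCube_iff.1 hQ
  exact measurableSet_dyadicCube n k

end DyadicCube

namespace Torus

variable {d : ℕ}

theorem ediam_ne_top (s : Set (Torus d)) : ediam s ≠ ⊤ :=
  isBounded_of_compactSpace.ediam_ne_top

theorem volume_ball_le (z : Torus d) (ρ : ℝ) :
    volume (ball z ρ) ≤ ENNReal.ofReal (2 * ρ) ^ d := by
  rcases le_or_gt ρ 0 with hρ | hρ
  · simp [ball_eq_empty.2 hρ]
  rw [ball_pi _ hρ, volume_pi_pi]
  calc ∏ i, volume (ball (z i) ρ) ≤ ∏ _i : Fin d, ENNReal.ofReal (2 * ρ) := by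
        gcongr with i
        calc volume (ball (z i) ρ) ≤ volume (closedBall (z i) ρ) :=
              measure_mono ball_subset_closedBall
          _ ≤ ENNReal.ofReal (2 * ρ) := by
              rw [AddCircle.volume_closedBall]
              exact ENNReal.ofReal_le_ofReal (min_le_right _ _)
    _ = ENNReal.ofReal (2 * ρ) ^ d := by simp

theorem ofReal_min_pow_le_volume_ball (z : Torus d) {ρ : ℝ} (hρ : 0 < ρ) :
    ENNReal.ofReal (min 1 ρ) ^ d ≤ volume (ball z ρ) := by
  calc ENNReal.ofReal (min 1 ρ) ^ d = volume (closedBall z (ρ / 2)) := by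
        rw [closedBall_pi _ (by positivity), volume_pi_pi]
        simp [AddCircle.volume_closedBall, mul_div_cancel₀]
    _ ≤ volume (ball z ρ) := measure_mono (closedBall_subset_ball (by linarith))

theorem volume_ball_ne_zero (z : Torus d) {ρ : ℝ} (hρ : 0 < ρ) :
    volume (ball z ρ) ≠ 0 :=
  (pos_of_ne_zero (pow_ne_zero _ (ENNReal.ofReal_pos.2 (lt_min one_pos hρ)).ne')).trans_le
    (ofReal_min_pow_le_volume_ball z hρ) |>.ne'

theorem volume_ball_ne_top (z : Torus d) (ρ : ℝ) : volume (ball z ρ) ≠ ⊤ :=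
  ((volume_ball_le z ρ).trans_lt (ENNReal.pow_lt_top ENNReal.ofReal_lt_top)).ne

end Torus

theorem ENNReal.tsum_mul_sq_le {ι : Type*} (f g : ι → ℝ≥0∞) :
    (∑' i, f i * g i) ^ 2 ≤ (∑' i, f i ^ 2) * ∑' i, g i ^ 2 := by
  have hpq : (2 : ℝ).HolderConjugate 2 := .two_two
  have holder : ∑' i, f i * g i ≤
      (∑' i, f i ^ (2 : ℝ)) ^ (1 / 2 : ℝ) * (∑' i, g i ^ (2 : ℝ)) ^ (1 / 2 : ℝ) := by
    rw [ENNReal.tsum_eq_iSup_sum]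
    refine iSup_le fun s => (ENNReal.inner_le_Lp_mul_Lq s f g hpq).trans ?_
    gcongr <;> exact ENNReal.sum_le_tsum s
  calc (∑' i, f i * g i) ^ 2
      ≤ ((∑' i, f i ^ (2 : ℝ)) ^ (1 / 2 : ℝ) * (∑' i, g i ^ (2 : ℝ)) ^ (1 / 2 : ℝ)) ^ 2 := by
        gcongr
    _ = (∑' i, f i ^ 2) * ∑' i, g i ^ 2 := by
        simp only [mul_pow, ← ENNReal.rpow_natCast, ← ENNReal.rpow_mul]
        norm_num

theorem ENNReal.half_le_or_half_le_of_le_add {a x y : ℝ≥0∞} (h : a ≤ x + y) :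
    a / 2 ≤ x ∨ a / 2 ≤ y := by
  by_contra! hxy
  exact (h.trans_lt (ENNReal.add_lt_add hxy.1 hxy.2)).ne (ENNReal.add_halves a).symm

theorem ENNReal.div_mul_mul_le_of_le_mul {a b m ρ S : ℝ≥0∞} (hm0 : m ≠ 0) (hmt : m ≠ ⊤)
    (h : a / m * ρ ≤ b * S) : a / (m * b) * ρ ≤ S := by
  have hdiv : a / (m * b) * ρ = a / m * ρ / b := by
    simp only [div_eq_mul_inv, ENNReal.mul_inv (Or.inl hm0) (Or.inl hmt)]
    ring
  exact hdiv ▸ ENNReal.div_le_of_le_mul (mul_comm b S ▸ h)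

theorem ENNReal.min_mul_le_of_le_add {a b c w ρ S X Y : ℝ≥0∞} (hw0 : w ≠ 0) (hwt : w ≠ ⊤)
    (hρ0 : ρ ≠ 0) (hρt : ρ ≠ ⊤) (h : a * w * ρ ≤ X + Y) (hX : X ≤ b * w * S)
    (hY : Y ^ 2 ≤ c * w ^ 2 * ρ * S) :
    min (a / (2 * b)) (a ^ 2 / (4 * c)) * ρ ≤ S := by
  rcases ENNReal.half_le_or_half_le_of_le_add h with hX' | hY'
  · refine (mul_le_mul_left (min_le_left _ _) ρ).trans
      (ENNReal.div_mul_mul_le_of_le_mul two_ne_zero ENNReal.ofNat_ne_top ?_)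
    rw [← ENNReal.mul_le_mul_iff_left hw0 hwt]
    calc a / 2 * ρ * w = a * w * ρ / 2 := by simp only [div_eq_mul_inv]; ring
      _ ≤ b * S * w := hX'.trans (hX.trans_eq (by ring))
  · refine (mul_le_mul_left (min_le_right _ _) ρ).trans
      (ENNReal.div_mul_mul_le_of_le_mul four_ne_zero ENNReal.ofNat_ne_top ?_)
    rw [← ENNReal.mul_le_mul_iff_left (mul_ne_zero (pow_ne_zero 2 hw0) hρ0)
      (ENNReal.mul_ne_top (ENNReal.pow_ne_top hwt) hρt)]
    calc a ^ 2 / 4 * ρ * (w ^ 2 * ρ) = (a * w * ρ / 2) ^ 2 := by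
          simp only [div_eq_mul_inv, mul_pow, ← ENNReal.inv_pow]
          norm_num
          ring
      _ ≤ Y ^ 2 := by gcongr
      _ ≤ c * S * (w ^ 2 * ρ) := hY.trans_eq (by ring)

theorem ENNReal.rpow_le_rpow_sub_mul_rpow {ℓ r : ℝ≥0∞} (hℓ0 : ℓ ≠ 0) (hℓt : ℓ ≠ ⊤) (hℓr : ℓ ≤ r)
    {t κ : ℝ} (htκ : t ≤ κ) : ℓ ^ κ ≤ r ^ (κ - t) * ℓ ^ t :=
  calc ℓ ^ κ = ℓ ^ (κ - t) * ℓ ^ t := by rw [← ENNReal.rpow_add _ _ hℓ0 hℓt, sub_add_cancel]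
    _ ≤ r ^ (κ - t) * ℓ ^ t := by gcongr

theorem ENNReal.eventually_mul_le_of_lt_liminf {α : Type*} {l : Filter α} {u : α → ℝ≥0∞}
    {v c : ℝ≥0∞} (hv0 : v ≠ 0) (hvt : v ≠ ⊤) (h : c < liminf (fun n => u n / v) l) :
    ∀ᶠ n in l, c * v ≤ u n :=
  (eventually_lt_of_lt_liminf h).mono fun _ hn =>
    (ENNReal.le_div_iff_mul_le (Or.inl hv0) (Or.inl hvt)).1 hn.le

theorem ENNReal.eventually_le_mul_of_limsup_lt {α : Type*} {l : Filter α} {u : α → ℝ≥0∞}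
    {v c : ℝ≥0∞} (hv0 : v ≠ 0) (hvt : v ≠ ⊤) (h : limsup (fun n => u n / v) l < c) :
    ∀ᶠ n in l, u n ≤ c * v :=
  (eventually_lt_of_limsup_lt h).mono fun _ hn => (ENNReal.div_le_iff hv0 hvt).1 hn.le

theorem measure_iUnion_le_tsum_add_tsum_disjointed {X : Type*} [MeasurableSpace X]
    (μ : Measure X) (f : ℕ → Set X) (J : Set ℕ) :
    μ (⋃ j, f j) ≤ ∑' j : J, μ (f j) + ∑' j : ↥Jᶜ, μ (disjointed f j) :=
  calc μ (⋃ j, f j) = μ (⋃ j, disjointed f j) := by rw [iUnion_disjointed]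
    _ ≤ ∑' j, μ (disjointed f j) := measure_iUnion_le _
    _ ≤ ∑' j : J, μ (disjointed f j) + ∑' j : ↥Jᶜ, μ (disjointed f j) := by
        rw [← tsum_univ, ← union_compl_self J]
        exact ENNReal.tsum_union_le (fun j => μ (disjointed f j)) J Jᶜ
    _ ≤ ∑' j : J, μ (f j) + ∑' j : ↥Jᶜ, μ (disjointed f j) := by
        gcongr with j
        exact disjointed_subset f j

section RieszEnergy

open Function

variable {X : Type*} [MeasurableSpace X] [PseudoEMetricSpace X]

def rieszEnergy (s : ℝ) (μ : Measure X) : ℝ≥0∞ :=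
  ∫⁻ x, ∫⁻ y, edist x y ^ (-s) ∂μ ∂μ

theorem tsum_rieszEnergy_restrict_le {ι : Type*} [Countable ι] (s : ℝ) (μ : Measure X)
    {g : ι → Set X} (hgm : ∀ i, MeasurableSet (g i)) (hgd : Pairwise (Disjoint on g)) :
    ∑' i, rieszEnergy s (μ.restrict (g i)) ≤ rieszEnergy s μ :=
  calc ∑' i, rieszEnergy s (μ.restrict (g i))
      ≤ ∑' i, ∫⁻ x in g i, ∫⁻ y, edist x y ^ (-s) ∂μ ∂μ :=
        ENNReal.tsum_le_tsum fun _ =>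
          lintegral_mono fun _ => lintegral_mono' Measure.restrict_le_self le_rfl
    _ = ∫⁻ x in ⋃ i, g i, ∫⁻ y, edist x y ^ (-s) ∂μ ∂μ := (lintegral_iUnion hgm hgd _).symm
    _ ≤ rieszEnergy s μ := setLIntegral_le_lintegral _ _

theorem rpow_neg_mul_sq_le_rieszEnergy_restrict {s : ℝ} (hs : 0 ≤ s) (μ : Measure X)
    {A : Set X} (hA : MeasurableSet A) {ℓ : ℝ≥0∞} (hℓ : ediam A ≤ ℓ) :
    ℓ ^ (-s) * μ A ^ 2 ≤ rieszEnergy s (μ.restrict A) :=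
  calc ℓ ^ (-s) * μ A ^ 2 = ∫⁻ x in A, ∫⁻ y in A, ℓ ^ (-s) ∂μ ∂μ := by
        simp only [setLIntegral_const, sq, mul_assoc]
    _ ≤ rieszEnergy s (μ.restrict A) :=
        setLIntegral_mono' hA fun x hx => setLIntegral_mono' hA fun y hy => by
          rw [ENNReal.rpow_neg, ENNReal.rpow_neg]
          exact ENNReal.inv_le_inv.2 (ENNReal.rpow_le_rpow (edist_le_of_ediam_le hx hy hℓ) hs)

theorem sq_tsum_measure_le_of_ediam_le {ι : Type*} [Countable ι] (μ : Measure X)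
    {g : ι → Set X} (hgm : ∀ i, MeasurableSet (g i)) (hgd : Pairwise (Disjoint on g))
    {ℓ : ι → ℝ≥0∞} {δ : ℝ≥0∞} (hδ : δ ≠ ⊤) (hℓ0 : ∀ i, ℓ i ≠ 0) (hℓδ : ∀ i, ℓ i ≤ δ)
    (hgℓ : ∀ i, ediam (g i) ≤ ℓ i) {t s : ℝ} (hs : 0 ≤ s) (hts : t ≤ s) :
    (∑' i, μ (g i)) ^ 2 ≤ (∑' i, ℓ i ^ t) * (δ ^ (s - t) * rieszEnergy s μ) := by
  have hℓt i : ℓ i ≠ ⊤ := ne_top_of_le_ne_top hδ (hℓδ i)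
  have hsplit i : μ (g i) = ℓ i ^ (t / 2) * (ℓ i ^ (-(t / 2)) * μ (g i)) := by
    rw [← mul_assoc, ← ENNReal.rpow_add _ _ (hℓ0 i) (hℓt i), add_neg_cancel,
      ENNReal.rpow_zero, one_mul]
  have hterm i : (ℓ i ^ (-(t / 2)) * μ (g i)) ^ 2 ≤
      δ ^ (s - t) * rieszEnergy s (μ.restrict (g i)) :=
    calc (ℓ i ^ (-(t / 2)) * μ (g i)) ^ 2 = ℓ i ^ (s - t) * (ℓ i ^ (-s) * μ (g i) ^ 2) := by
          rw [mul_pow, ← mul_assoc, ← ENNReal.rpow_add _ _ (hℓ0 i) (hℓt i),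
            ← ENNReal.rpow_natCast, ← ENNReal.rpow_mul]
          ring_nf
      _ ≤ δ ^ (s - t) * rieszEnergy s (μ.restrict (g i)) := by
          gcongr
          · exact hℓδ i
          · exact rpow_neg_mul_sq_le_rieszEnergy_restrict hs μ (hgm i) (hgℓ i)
  calc (∑' i, μ (g i)) ^ 2 = (∑' i, ℓ i ^ (t / 2) * (ℓ i ^ (-(t / 2)) * μ (g i))) ^ 2 := by
        rw [tsum_congr hsplit]
    _ ≤ (∑' i, (ℓ i ^ (t / 2)) ^ 2) * ∑' i, (ℓ i ^ (-(t / 2)) * μ (g i)) ^ 2 :=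
        ENNReal.tsum_mul_sq_le _ _
    _ ≤ (∑' i, ℓ i ^ t) * (δ ^ (s - t) * rieszEnergy s μ) := by
        gcongr with i
        · rw [← ENNReal.rpow_natCast, ← ENNReal.rpow_mul]
          norm_num
        · calc ∑' i, (ℓ i ^ (-(t / 2)) * μ (g i)) ^ 2
              ≤ ∑' i, δ ^ (s - t) * rieszEnergy s (μ.restrict (g i)) := ENNReal.tsum_le_tsum hterm
            _ ≤ δ ^ (s - t) * rieszEnergy s μ := by
              rw [ENNReal.tsum_mul_left]
              gcongr
              exact tsum_rieszEnergy_restrict_le s μ hgm hgd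

end RieszEnergy

theorem le_dyadicContent {d : ℕ} {t : ℝ} {E : Set (Torus d)} {c : ℝ≥0∞}
    (h : ∀ f : ℕ → Set (Torus d), (∀ n, IsDyadicCube (f n)) → E ⊆ ⋃ n, f n →
      c ≤ ∑' n, ediam (f n) ^ t) :
    c ≤ dyadicContent t E :=
  le_iInf fun f => le_iInf fun hf => le_iInf fun hE => h f hf hE

theorem min_mul_rpow_le_tsum_ediam_rpow {d : ℕ} (hd : 0 < d) {t s κ : ℝ} (hs : 0 ≤ s)
    (hts : t ≤ s) (htκ : t ≤ κ) (μ : Measure (Torus d)) {a b C r δ : ℝ≥0∞} (hr0 : r ≠ 0)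
    (hrt : r ≠ ⊤) (hδt : δ ≠ ⊤) (hδ : δ ^ (s - t) = r ^ (2 * κ - t))
    (hQ : ∀ Q, IsDyadicCube Q → δ ≤ ediam Q → μ Q ≤ b * ediam Q ^ κ)
    (hen : rieszEnergy s μ ≤ C) {f : ℕ → Set (Torus d)} (hf : ∀ j, IsDyadicCube (f j))
    (hfr : ∀ j, ediam (f j) ≤ r) (hμ : a * r ^ κ ≤ μ (⋃ j, f j)) :
    min (a / (2 * b)) (a ^ 2 / (4 * C)) * r ^ t ≤ ∑' j, ediam (f j) ^ t := by
  set ℓ := fun j => ediam (f j)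
  set S := ∑' j, ℓ j ^ t
  have hℓ0 j : ℓ j ≠ 0 := (hf j).ediam_ne_zero hd
  have rpow_ne_zero (x : ℝ) : r ^ x ≠ 0 := by simp [ENNReal.rpow_eq_zero_iff, hr0, hrt]
  have rpow_ne_top (x : ℝ) : r ^ x ≠ ⊤ := by simp [ENNReal.rpow_eq_top_iff, hr0, hrt]
  set J : Set ℕ := {j | δ ≤ ℓ j}
  have hlarge : ∑' j : J, μ (f j) ≤ b * r ^ (κ - t) * S :=
    calc ∑' j : J, μ (f j) ≤ ∑' j : J, b * r ^ (κ - t) * ℓ j ^ t :=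
          ENNReal.tsum_le_tsum fun j => (hQ _ (hf j) j.2).trans <| by
            rw [mul_assoc]
            gcongr
            exact ENNReal.rpow_le_rpow_sub_mul_rpow (hℓ0 j) (Torus.ediam_ne_top _) (hfr j) htκ
      _ ≤ b * r ^ (κ - t) * S := by
          rw [ENNReal.tsum_mul_left]
          gcongr
          exact ENNReal.tsum_comp_le_tsum_of_injective Subtype.val_injective (fun j => ℓ j ^ t)
  have hsmall : (∑' j : ↥Jᶜ, μ (disjointed f j)) ^ 2 ≤ C * (r ^ (κ - t)) ^ 2 * r ^ t * S :=
    calc (∑' j : ↥Jᶜ, μ (disjointed f j)) ^ 2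
        ≤ (∑' j : ↥Jᶜ, ℓ j ^ t) * (δ ^ (s - t) * rieszEnergy s μ) :=
          sq_tsum_measure_le_of_ediam_le μ (g := fun j : ↥Jᶜ => disjointed f j)
            (ℓ := fun j : ↥Jᶜ => ℓ j)
            (fun j => MeasurableSet.disjointed (fun i => (hf i).measurableSet) j)
            ((disjoint_disjointed f).comp_of_injective Subtype.val_injective) hδt
            (fun j => hℓ0 j) (fun j => (not_le.1 (show ¬δ ≤ ℓ j from j.2)).le)
            (fun j => ediam_mono (disjointed_subset f j)) hs hts
      _ ≤ S * (r ^ (2 * κ - t) * C) := by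
          rw [← hδ]
          gcongr
          exact ENNReal.tsum_comp_le_tsum_of_injective Subtype.val_injective (fun j => ℓ j ^ t)
      _ = C * (r ^ (κ - t)) ^ 2 * r ^ t * S := by
          rw [← ENNReal.rpow_natCast, ← ENNReal.rpow_mul, mul_assoc C,
            ← ENNReal.rpow_add _ _ hr0 hrt]
          ring_nf
  refine ENNReal.min_mul_le_of_le_add (rpow_ne_zero _) (rpow_ne_top _) (rpow_ne_zero _)
    (rpow_ne_top _) ?_ hlarge hsmall
  rw [mul_assoc, ← ENNReal.rpow_add _ _ hr0 hrt, sub_add_cancel]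
  exact hμ.trans (measure_iUnion_le_tsum_add_tsum_disjointed μ f J)

theorem le_dyadicContent_inter {d : ℕ} (hd : 0 < d) {t s κ : ℝ} (ht : 0 ≤ t) (hts : t ≤ s)
    (htκ : t ≤ κ) (μ : Measure (Torus d)) {E F : Set (Torus d)} (hE : μ Eᶜ = 0)
    {a b C r δ : ℝ≥0∞} (hr0 : r ≠ 0) (hrt : r ≠ ⊤) (hδt : δ ≠ ⊤)
    (hδ : δ ^ (s - t) = r ^ (2 * κ - t)) (hF : a * r ^ κ ≤ μ F)
    (hQ : ∀ Q, IsDyadicCube Q → δ ≤ ediam Q → μ Q ≤ b * ediam Q ^ κ)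
    (hen : rieszEnergy s μ ≤ C) :
    min 1 (min (a / (2 * b)) (a ^ 2 / (4 * C))) * r ^ t ≤ dyadicContent t (E ∩ F) := by
  refine le_dyadicContent fun f hf hcover => ?_
  by_cases hbig : ∃ j, r ≤ ediam (f j)
  · obtain ⟨j, hj⟩ := hbig
    calc min 1 (min (a / (2 * b)) (a ^ 2 / (4 * C))) * r ^ t ≤ 1 * ediam (f j) ^ t := by
          gcongr
          exact min_le_left _ _
      _ ≤ ∑' j, ediam (f j) ^ t := (one_mul _).trans_le (ENNReal.le_tsum j)
  simp only [not_exists, not_le] at hbig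
  refine (mul_le_mul_left (min_le_right _ _) _).trans
    (min_mul_rpow_le_tsum_ediam_rpow hd (ht.trans hts) hts htκ μ hr0 hrt hδt hδ hQ hen hf
      (fun j => (hbig j).le) ?_)
  calc a * r ^ κ ≤ μ (E ∩ F) := hF.trans_eq (by rw [inter_comm, measure_inter_conull hE])
    _ ≤ μ (⋃ j, f j) := measure_mono hcover

namespace Torus

variable {d : ℕ} {μ : ℕ → Measure (Torus d)} {C : ℝ≥0∞}

theorem eventually_le_measure_dyadicCube (hC0 : C ≠ 0) (hCt : C ≠ ⊤)
    (hlow : ∀ (z : Torus d) (ρ : ℝ), 0 < ρ →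
      C⁻¹ ≤ liminf (fun n => μ n (ball z ρ) / volume (ball z ρ)) atTop)
    (n : ℕ) (k : Fin d → ℤ) :
    ∀ᶠ m in atTop, C⁻¹ / 2 * 2⁻¹ ^ d * ediam (dyadicCube d n k) ^ d ≤ μ m (dyadicCube d n k) := by
  set ρ : ℝ := 2⁻¹ / 2 ^ n
  have hρ : 0 < ρ := by positivity
  have hρ1 : ρ ≤ 1 := (div_le_self (by norm_num) (one_le_pow₀ one_le_two)).trans (by norm_num)
  have hvol : 2⁻¹ ^ d * ediam (dyadicCube d n k) ^ d ≤ volume (ball (dyadicCenter n k) ρ) :=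
    calc 2⁻¹ ^ d * ediam (dyadicCube d n k) ^ d ≤ (2⁻¹ * 2⁻¹ ^ n) ^ d := by
          rw [mul_pow]
          gcongr
          exact ediam_dyadicCube_le n k
      _ = ENNReal.ofReal (min 1 ρ) ^ d := by
          rw [min_eq_right hρ1]
          simp [ρ, div_eq_mul_inv, ENNReal.ofReal_mul, ENNReal.ofReal_pow, ENNReal.ofReal_inv_of_pos,
            ENNReal.inv_pow]
      _ ≤ volume (ball (dyadicCenter n k) ρ) := ofReal_min_pow_le_volume_ball _ hρ
  have hhalf : C⁻¹ / 2 < C⁻¹ :=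
    ENNReal.half_lt_self (ENNReal.inv_ne_zero.2 hCt) (ENNReal.inv_ne_top.2 hC0)
  filter_upwards [ENNReal.eventually_mul_le_of_lt_liminf (volume_ball_ne_zero _ hρ)
    (volume_ball_ne_top _ _) (hhalf.trans_le (hlow _ ρ hρ))] with m hm
  calc C⁻¹ / 2 * 2⁻¹ ^ d * ediam (dyadicCube d n k) ^ d
      ≤ C⁻¹ / 2 * volume (ball (dyadicCenter n k) ρ) := by
        rw [mul_assoc]
        gcongr
    _ ≤ μ m (ball (dyadicCenter n k) ρ) := hm
    _ ≤ μ m (dyadicCube d n k) := measure_mono (ball_dyadicCenter_subset n k)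

theorem eventually_measure_le_mul_ediam_pow (hC0 : C ≠ 0) (hCt : C ≠ ⊤)
    (hup : ∀ (z : Torus d) (ρ : ℝ), 0 < ρ →
      limsup (fun n => μ n (ball z ρ) / volume (ball z ρ)) atTop ≤ C)
    {Q : Set (Torus d)} (hQ : ediam Q ≠ 0) :
    ∀ᶠ m in atTop, μ m Q ≤ 2 * C * 4 ^ d * ediam Q ^ d := by
  obtain ⟨z, hz⟩ : Q.Nonempty := nonempty_iff_ne_empty.2 (by rintro rfl; exact hQ ediam_empty)
  have hQt := ediam_ne_top Q
  set ρ : ℝ := 2 * (ediam Q).toReal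
  have hρ : 0 < ρ := by have := ENNReal.toReal_pos hQ hQt; positivity
  have hofReal : ENNReal.ofReal ρ = 2 * ediam Q := by
    rw [ENNReal.ofReal_mul zero_le_two, ENNReal.ofReal_toReal hQt, ENNReal.ofReal_ofNat]
  have hQball : Q ⊆ ball z ρ := fun y hy => by
    rw [mem_ball, ← edist_lt_ofReal, hofReal]
    rw [two_mul]
    exact (edist_le_ediam_of_mem hy hz).trans_lt (ENNReal.lt_add_right hQt hQ)
  have hvol : volume (ball z ρ) ≤ 4 ^ d * ediam Q ^ d :=
    calc volume (ball z ρ) ≤ ENNReal.ofReal (2 * ρ) ^ d := volume_ball_le z ρ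
      _ = 4 ^ d * ediam Q ^ d := by
          rw [ENNReal.ofReal_mul zero_le_two, hofReal, ENNReal.ofReal_ofNat, ← mul_assoc, ← mul_pow]
          norm_num
  have hC2 : C < 2 * C := by rw [two_mul]; exact ENNReal.lt_add_right hCt hC0
  filter_upwards [ENNReal.eventually_le_mul_of_limsup_lt (volume_ball_ne_zero _ hρ)
    (volume_ball_ne_top _ _) ((hup z ρ hρ).trans_lt hC2)] with m hm
  calc μ m Q ≤ μ m (ball z ρ) := measure_mono hQball
    _ ≤ 2 * C * volume (ball z ρ) := hm
    _ ≤ 2 * C * 4 ^ d * ediam Q ^ d := by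
        rw [mul_assoc _ (4 ^ d)]
        gcongr

end Torus

theorem liminf_dyadicContent_bound_general
    (d : ℕ) (t : ℝ) (ht : 0 < t)
    (C : ℝ≥0∞) (hCtop : C < ⊤) :
    ∃ C₀ : ℝ≥0∞, 0 < C₀ ∧
      ∀ (s : ℝ), t < s → s < d →
      ∀ (E : ℕ → Set (Torus d)), (∀ n, IsOpen (E n)) →
      ∀ (μ : ℕ → Measure (Torus d)), (∀ n, IsFiniteMeasure (μ n)) →
        (∀ n, μ n (E n)ᶜ = 0) →
        (∀ n, μ n ≪ (volume : Measure (Torus d))) →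
        (∀ (z : Torus d) (ρ : ℝ), 0 < ρ →
          C⁻¹ ≤ liminf (fun n => μ n (ball z ρ) / volume (ball z ρ)) atTop) →
        (∀ (z : Torus d) (ρ : ℝ), 0 < ρ →
          limsup (fun n => μ n (ball z ρ) / volume (ball z ρ)) atTop ≤ C) →
        (∀ n, (∫⁻ x, ∫⁻ y, edist x y ^ (-s) ∂(μ n) ∂(μ n)) < C) →
        ∀ D : Set (Torus d), IsDyadicCube D →
          C₀ * EMetric.diam D ^ t ≤
            liminf (fun n => dyadicContent t (E n ∩ D)) atTop := by
  have hCt := hCtop.ne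
  set a : ℝ≥0∞ := C⁻¹ / 2 * 2⁻¹ ^ d
  set b : ℝ≥0∞ := 2 * C * 4 ^ d
  have ha : a ≠ 0 := by simp [a, hCt]
  refine ⟨min 1 (min (a / (2 * b)) (a ^ 2 / (4 * C))), lt_min one_pos (lt_min ?_ ?_), ?_⟩
  · exact ENNReal.div_pos ha (by simp [b, hCt, ENNReal.mul_eq_top])
  · exact ENNReal.div_pos (pow_ne_zero 2 ha) (ENNReal.mul_ne_top (by simp) hCt)
  intro s hts hsd E _ μ _ hE _ hlow hup hen D hD
  have hd : 0 < d := by exact_mod_cast (ht.trans hts).trans hsd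
  have hC0 : C ≠ 0 := (zero_le.trans_lt (hen 0)).ne'
  obtain ⟨n, k, rfl⟩ := isDyadicCube_iff.1 hD
  set r := ediam (dyadicCube d n k)
  have hr0 : r ≠ 0 := hD.ediam_ne_zero hd
  have hrt : r ≠ ⊤ := Torus.ediam_ne_top _
  set δ := r ^ ((2 * d - t) / (s - t))
  have hδ0 : δ ≠ 0 := by simp [δ, ENNReal.rpow_eq_zero_iff, hr0, hrt]
  have hδt : δ ≠ ⊤ := by simp [δ, ENNReal.rpow_eq_top_iff, hr0, hrt]
  have hδ : δ ^ (s - t) = r ^ (2 * (d : ℝ) - t) := by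
    rw [← ENNReal.rpow_mul, div_mul_cancel₀ _ (sub_pos.2 hts).ne']
  have hlarge := (finite_setOf_isDyadicCube_le_ediam (d := d) hδ0).eventually_all.2
    fun Q hQ => Torus.eventually_measure_le_mul_ediam_pow hC0 hCt hup (hQ.1.ediam_ne_zero hd)
  refine le_liminf_of_le (by isBoundedDefault) ?_
  filter_upwards [Torus.eventually_le_measure_dyadicCube hC0 hCt hlow n k, hlarge] with m hF hQ
  exact le_dyadicContent_inter hd ht.le hts.le (by linarith) (μ m) (hE m) hr0 hrt hδt hδ
    (by rwa [ENNReal.rpow_natCast])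
    (fun Q hQ' hδQ => by rw [ENNReal.rpow_natCast]; exact hQ Q ⟨hQ', hδQ⟩) (hen m).le

/-- **Key estimate in the proof of the Frostman-type lemma.** For `0 < t < s < d`, if the
measures `μ_n` live on the open sets `E_n`, are absolutely continuous with respect to `λ`,
have density ratios on balls asymptotically between `C⁻¹` and `C`, and `s`-energies
bounded by `C`, then there is a constant `C₀ > 0` depending only on `d`, `t` and `C` such
that `liminf_n ℳ_∞^t(E_n ∩ D) ≥ C₀ |D|^t` for every dyadic cube `D`. -/
theorem liminf_dyadicContent_bound
    (d : ℕ) (hd : 0 < d) (t : ℝ) (ht : 0 < t)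
    (C : ℝ≥0∞) (hC0 : 0 < C) (hCtop : C < ⊤) :
    ∃ C₀ : ℝ≥0∞, 0 < C₀ ∧
      ∀ (s : ℝ), t < s → s < d →
      ∀ (E : ℕ → Set (Torus d)), (∀ n, IsOpen (E n)) →
      ∀ (μ : ℕ → Measure (Torus d)), (∀ n, IsFiniteMeasure (μ n)) →
        (∀ n, μ n (E n)ᶜ = 0) →
        (∀ n, μ n ≪ (volume : Measure (Torus d))) →
        (∀ (z : Torus d) (ρ : ℝ), 0 < ρ →
          C⁻¹ ≤ liminf (fun n => μ n (ball z ρ) / volume (ball z ρ)) atTop) →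
        (∀ (z : Torus d) (ρ : ℝ), 0 < ρ →
          limsup (fun n => μ n (ball z ρ) / volume (ball z ρ)) atTop ≤ C) →
        (∀ n, (∫⁻ x, ∫⁻ y, edist x y ^ (-s) ∂(μ n) ∂(μ n)) < C) →
        ∀ D : Set (Torus d), IsDyadicCube D →
          C₀ * EMetric.diam D ^ t ≤
            liminf (fun n => dyadicContent t (E n ∩ D)) atTop :=
  liminf_dyadicContent_bound_general d t ht C hCtop
end
end
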